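/- arXiv:1009.6124 — 5 statements merged into one kernel-verified Lean document; each statement's English description precedes it below -/
import Mathlib

section
/- Let H be a complex Hilbert space, let u : [0,∞) → H be differentiable and satisfy u'(t) = A(t)(u(t)) + F(t, u(t)) for all t ≥ 0, where for each t, A(t) is a bounded linear operator on H and F(t,·) : H → H. Assume there are constants c₀ > 0 and p > 1 with ‖F(t,x)‖ ≤ c₀‖x‖^p for all t ≥ 0 and x ∈ H, and a constant k > 0 with Re⟪A(t)x, x⟫ ≤ -k‖x‖² for all t ≥ 0 and x ∈ H. Let ε ∈ (0, k) and set λ = (c₀/ε)^{1/(p-1)}. If ‖u(0)‖ ≤ 1/λ, then for all t ≥ 0 one has ‖u(t)‖ ≤ (1/λ)·e^{-(k-ε)t}. -/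
/-! On the ball `‖x‖ ≤ 1/λ` the nonlinearity costs at most `c₀ λ^(1-p) = ε` of the dissipation
rate `k`, so `d/dt ‖u‖² ≤ -2(k-ε)‖u‖²` as long as `‖u‖ ≤ 1/λ`. The barrier
`λ⁻² e^(-2(k-ε)t)` never exceeds `λ⁻²`, so a fencing argument keeps `‖u‖²` below it
for all time. -/

open Set Filter Topology Real
open scoped InnerProductSpace

section InnerProduct

variable {𝕜 E : Type*} [RCLike 𝕜] [NormedAddCommGroup E] [InnerProductSpace 𝕜 E]

theorem HasDerivAt.norm_sq_re_inner [NormedSpace ℝ E] {u : ℝ → E} {u' : E} {t : ℝ}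
    (hu : HasDerivAt u u' t) :
    HasDerivAt (fun s => ‖u s‖ ^ 2) (2 * RCLike.re ⟪u', u t⟫_𝕜) t := by
  have h := (RCLike.reCLM (K := 𝕜)).hasFDerivAt.comp_hasDerivAt t (hu.inner 𝕜 hu)
  simp only [Function.comp_def, RCLike.reCLM_apply, inner_self_eq_norm_sq, map_add,
    inner_re_symm (𝕜 := 𝕜) (u t)] at h
  rwa [two_mul]

theorem re_inner_add_le_of_norm_le {a f x : E} {k c p R : ℝ} (hc : 0 ≤ c) (hp : 1 ≤ p)
    (ha : RCLike.re ⟪a, x⟫_𝕜 ≤ -k * ‖x‖ ^ 2) (hf : ‖f‖ ≤ c * ‖x‖ ^ p) (hx : ‖x‖ ≤ R) :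
    RCLike.re ⟪a + f, x⟫_𝕜 ≤ -(k - c * R ^ (p - 1)) * ‖x‖ ^ 2 := by
  have hfx : RCLike.re ⟪f, x⟫_𝕜 ≤ c * R ^ (p - 1) * ‖x‖ ^ 2 :=
    calc RCLike.re ⟪f, x⟫_𝕜 ≤ ‖f‖ * ‖x‖ := (RCLike.re_le_norm _).trans (norm_inner_le_norm _ _)
      _ ≤ c * ‖x‖ ^ p * ‖x‖ := by gcongr
      _ = c * ‖x‖ ^ (p - 1) * ‖x‖ ^ 2 := by
        rw [← sub_add_cancel p 1, rpow_add_one' (norm_nonneg x) (by linarith)]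
        ring_nf
      _ ≤ c * R ^ (p - 1) * ‖x‖ ^ 2 := by gcongr
  rw [inner_add_left, map_add]
  linarith

end InnerProduct

theorem le_mul_exp_of_hasDerivWithinAt_le {f f' : ℝ → ℝ} {a b C r : ℝ} (hC : 0 < C)
    (hr : 0 < r) (hf : ContinuousOn f (Icc a b))
    (hf' : ∀ s ∈ Ico a b, HasDerivWithinAt f (f' s) (Ici s) s) (ha : f a ≤ C)
    (hdecay : ∀ s ∈ Ico a b, f s ≤ C → f' s ≤ -r * f s) :
    ∀ ⦃x⦄, x ∈ Icc a b → f x ≤ C * exp (-r * (x - a)) := by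
  -- The fencing theorem needs a strict inequality where `f` touches the barrier, so compare
  -- with every slower rate `r' < r` (whose barrier stays below `C`) and let `r' → r`.
  have hslower : ∀ r' ∈ Ioo 0 r, ∀ ⦃x⦄, x ∈ Icc a b → f x ≤ C * exp (-r' * (x - a)) := by
    intro r' hr'
    refine image_le_of_deriv_right_lt_deriv_boundary hf hf' (by simpa using ha)
      (B' := fun s => C * (exp (-r' * (s - a)) * (-r' * 1))) (fun s => ?_) fun s hs hfs => ?_
    · exact ((((hasDerivAt_id s).sub_const a).const_mul (-r')).exp).const_mul C
    · have hpos : 0 < f s := hfs ▸ by positivity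
      have hle : f s ≤ C := hfs ▸ mul_le_of_le_one_right hC.le
        (exp_le_one_iff.2 (by nlinarith [hs.1, hr'.1]))
      calc f' s ≤ -r * f s := hdecay s hs hle
        _ < -r' * f s := by nlinarith [hr'.2]
        _ = C * (exp (-r' * (s - a)) * (-r' * 1)) := by rw [hfs]; ring
  intro x hx
  have hlim : Tendsto (fun r' => C * exp (-r' * (x - a))) (𝓝[<] r)
      (𝓝 (C * exp (-r * (x - a)))) :=
    ((continuous_const.mul ((continuous_neg.mul continuous_const).rexp)).tendsto r).mono_left
      nhdsWithin_le_nhds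
  refine ge_of_tendsto hlim ?_
  filter_upwards [Ioo_mem_nhdsLT hr] with r' hr' using hslower r' hr' hx

theorem asymptotic_decay_constant_kappa_general
    {H : Type*} [NormedAddCommGroup H] [InnerProductSpace ℂ H]
    (A : ℝ → H →L[ℂ] H) (F : ℝ → H → H) (u : ℝ → H)
    (hu : ∀ t : ℝ, 0 ≤ t → HasDerivAt u (A t (u t) + F t (u t)) t)
    (c₀ p : ℝ) (hc₀ : 0 < c₀) (hp : 1 < p)
    (hF : ∀ t : ℝ, 0 ≤ t → ∀ x : H, ‖F t x‖ ≤ c₀ * ‖x‖ ^ p)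
    (k : ℝ)
    (hA : ∀ t : ℝ, 0 ≤ t → ∀ x : H, (inner ℂ (A t x) x : ℂ).re ≤ -k * ‖x‖ ^ 2)
    (ε : ℝ) (hε : ε ∈ Set.Ioo 0 k)
    (lam : ℝ) (hlam : lam = (c₀ / ε) ^ (1 / (p - 1)))
    (hu0 : ‖u 0‖ ≤ 1 / lam) :
    ∀ t : ℝ, 0 ≤ t → ‖u t‖ ≤ (1 / lam) * Real.exp (-(k - ε) * t) := by
  obtain ⟨hε, hεk⟩ := hε
  have hlam_pos : 0 < lam := hlam ▸ rpow_pos_of_pos (div_pos hc₀ hε) _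
  have hthreshold : c₀ * (1 / lam) ^ (p - 1) = ε := by
    rw [one_div, inv_rpow hlam_pos.le, hlam, ← rpow_mul (div_pos hc₀ hε).le,
      one_div_mul_cancel (by linarith), rpow_one]
    field_simp
  have hdecay : ∀ s, 0 ≤ s → ‖u s‖ ^ 2 ≤ (1 / lam) ^ 2 →
      2 * (inner ℂ (A s (u s) + F s (u s)) (u s) : ℂ).re ≤ -(2 * (k - ε)) * ‖u s‖ ^ 2 := by
    intro s hs hus
    have hre := re_inner_add_le_of_norm_le (𝕜 := ℂ) hc₀.le hp.le (hA s hs _) (hF s hs _)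
      ((pow_le_pow_iff_left₀ (norm_nonneg _) (by positivity) two_ne_zero).1 hus)
    rw [hthreshold, RCLike.re_to_complex] at hre
    linarith
  intro t ht
  have hsq := le_mul_exp_of_hasDerivWithinAt_le (f := fun s => ‖u s‖ ^ 2) (C := (1 / lam) ^ 2)
    (r := 2 * (k - ε)) (by positivity) (by linarith)
    (fun s hs => ((hu s hs.1).continuousAt.norm.pow 2).continuousWithinAt)
    (fun s hs => ((hu s hs.1).norm_sq_re_inner (𝕜 := ℂ)).hasDerivWithinAt) (by gcongr)
    (fun s hs => hdecay s hs.1) ⟨ht, le_rfl⟩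
  refine le_of_pow_le_pow_left₀ two_ne_zero (by positivity) (hsq.trans_eq ?_)
  rw [mul_pow, ← exp_nat_mul]
  ring_nf

/-- **Theorem 1.2** (Ramm). Let `H` be a complex Hilbert space, `u` a differentiable
solution of `u' = A(t)u + F(t,u)` on `[0,∞)`, where each `A t` is a bounded linear
operator with `Re⟪A(t)x, x⟫ ≤ -k‖x‖²` and `‖F(t,x)‖ ≤ c₀‖x‖^p`, `p > 1`, `c₀ > 0`,
`k > 0`.  For `ε ∈ (0,k)` and `λ = (c₀/ε)^{1/(p-1)}`, if `‖u 0‖ ≤ 1/λ` then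
`‖u t‖ ≤ (1/λ) e^{-(k-ε)t}` for all `t ≥ 0`. -/
theorem asymptotic_decay_constant_kappa
    {H : Type*} [NormedAddCommGroup H] [InnerProductSpace ℂ H] [CompleteSpace H]
    (A : ℝ → H →L[ℂ] H) (F : ℝ → H → H) (u : ℝ → H)
    (hu : ∀ t : ℝ, 0 ≤ t → HasDerivAt u (A t (u t) + F t (u t)) t)
    (c₀ p : ℝ) (hc₀ : 0 < c₀) (hp : 1 < p)
    (hF : ∀ t : ℝ, 0 ≤ t → ∀ x : H, ‖F t x‖ ≤ c₀ * ‖x‖ ^ p)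
    (k : ℝ) (hk : 0 < k)
    (hA : ∀ t : ℝ, 0 ≤ t → ∀ x : H, (inner ℂ (A t x) x : ℂ).re ≤ -k * ‖x‖ ^ 2)
    (ε : ℝ) (hε : ε ∈ Set.Ioo 0 k)
    (lam : ℝ) (hlam : lam = (c₀ / ε) ^ (1 / (p - 1)))
    (hu0 : ‖u 0‖ ≤ 1 / lam) :
    ∀ t : ℝ, 0 ≤ t → ‖u t‖ ≤ (1 / lam) * Real.exp (-(k - ε) * t) :=
  asymptotic_decay_constant_kappa_general A F u hu c₀ p hc₀ hp hF k hA ε hε lam hlam hu0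
end

section
/- Let H be a complex Hilbert space, let u : [0,∞) → H be differentiable and satisfy u'(t) = A(t)(u(t)) + F(t, u(t)) for all t ≥ 0, where for each t, A(t) is a bounded linear operator on H and F(t,·) : H → H. Assume there are constants c₀ > 0 and p > 1 with ‖F(t,x)‖ ≤ c₀‖x‖^p for all t ≥ 0 and x ∈ H. Let c₁ > 0, 0 < q ≤ 1, and assume Re⟪A(t)x, x⟫ ≤ -(c₁/(1+t)^q)‖x‖² for all t ≥ 0 and x ∈ H. Suppose λ > 0 and ν > 0 satisfy c₀/λ^{p-1} + ν ≤ c₁ and (p-1)ν ≥ q, and that ‖u(0)‖ ≤ 1/λ. Then ‖u(t)‖ ≤ 1/(λ·(1+t)^{ν}) for all t ≥ 0. -/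
/-!
The energy `f = ‖u‖²` satisfies the Bernoulli-type differential inequality
`f' ≤ -2 c₁ (1+t)^(-q) f + 2 c₀ f^((p+1)/2)`, and `B = (λ (1+t)^ν)⁻²` is a supersolution of the
same equation: since `(1+t)^(-q)` dominates both `(1+t)⁻¹` and `(1+t)^(-(p-1)ν)`, the two
conditions on `λ, ν` give `c₀ B^((p-1)/2) + ν/(1+t) ≤ c₁/(1+t)^q`. As `y ↦ y^((p+1)/2)` is
Lipschitz on the bounded range of `f`, the comparison principle for one-sided Lipschitz
right-hand sides gives `f ≤ B`.
-/

open Set Real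
open scoped InnerProductSpace

theorem HasDerivAt.norm_sq_re_inner_s4 {H : Type*} [NormedAddCommGroup H] [InnerProductSpace ℂ H]
    {u : ℝ → H} {u' : H} {t : ℝ} (h : HasDerivAt u u' t) :
    HasDerivAt (‖u ·‖ ^ 2) (2 * (⟪u', u t⟫_ℂ).re) t := by
  let _ : InnerProductSpace ℝ H := InnerProductSpace.rclikeToReal ℂ H
  simpa only [real_inner_eq_re_inner, RCLike.re_to_complex, inner_re_symm (𝕜 := ℂ) (u t)]
    using h.norm_sq

theorem two_re_inner_add_le {H : Type*} [NormedAddCommGroup H] [InnerProductSpace ℂ H]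
    {x y z : H} {a c p : ℝ} (hp : 0 ≤ p)
    (hy : (⟪y, x⟫_ℂ).re ≤ -a * ‖x‖ ^ 2) (hz : ‖z‖ ≤ c * ‖x‖ ^ p) :
    2 * (⟪y + z, x⟫_ℂ).re ≤ -(2 * a) * ‖x‖ ^ 2 + 2 * c * (‖x‖ ^ 2) ^ ((p + 1) / 2) := by
  have hpow : (‖x‖ ^ 2) ^ ((p + 1) / 2) = ‖x‖ ^ p * ‖x‖ := by
    rw [← rpow_natCast, ← rpow_mul (norm_nonneg x), Nat.cast_ofNat,
      show (2 : ℝ) * ((p + 1) / 2) = p + 1 by ring, rpow_add' (norm_nonneg x) (by linarith),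
      rpow_one]
  have hzx : (⟪z, x⟫_ℂ).re ≤ c * ‖x‖ ^ p * ‖x‖ :=
    (re_inner_le_norm (𝕜 := ℂ) z x).trans (mul_le_mul_of_nonneg_right hz (norm_nonneg x))
  rw [inner_add_left, Complex.add_re, hpow]
  linarith

theorem rpow_sub_rpow_le_mul_sub {s R x y : ℝ} (hs : 1 ≤ s) (hx : 0 ≤ x) (hxy : x ≤ y)
    (hyR : y ≤ R) : y ^ s - x ^ s ≤ s * R ^ (s - 1) * (y - x) := by
  refine (convex_Icc 0 R).image_sub_le_mul_sub_of_deriv_le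
    (fun z hz => (continuousAt_rpow_const z s (Or.inr (by linarith))).continuousWithinAt)
    (fun z _ => (hasDerivAt_rpow_const (Or.inr hs)).differentiableAt.differentiableWithinAt)
    (fun z hz => ?_) x ⟨hx, hxy.trans hyR⟩ y ⟨hx.trans hxy, hyR⟩ hxy
  rw [interior_Icc] at hz
  rw [Real.deriv_rpow_const]
  gcongr
  exacts [hz.1.le, hz.2.le]

theorem image_le_of_deriv_right_le_deriv_boundary_of_lipschitz {f f' B B' : ℝ → ℝ} {a b L : ℝ}
    (hf : ContinuousOn f (Icc a b))
    (hf' : ∀ x ∈ Ico a b, HasDerivWithinAt f (f' x) (Ici x) x)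
    (ha : f a ≤ B a) (hB : ContinuousOn B (Icc a b))
    (hB' : ∀ x ∈ Ico a b, HasDerivWithinAt B (B' x) (Ici x) x)
    (bound : ∀ x ∈ Ico a b, B x ≤ f x → f' x ≤ B' x + L * (f x - B x)) :
    ∀ ⦃x⦄, x ∈ Icc a b → f x ≤ B x := by
  intro x hx
  set E : ℝ → ℝ := fun t => exp ((L + 1) * (t - a))
  have hE_pos : ∀ t, 0 < E t := fun t => exp_pos _
  have hE : ∀ t, HasDerivAt E ((L + 1) * E t) t := fun t => by
    simpa [E, mul_comm] using (((hasDerivAt_id t).sub_const a).const_mul (L + 1)).exp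
  -- `B + ε E` is a strict supersolution, so it dominates `f`; then let `ε → 0`.
  have key : ∀ ε > 0, f x ≤ B x + ε * E x := fun ε hε =>
    image_le_of_deriv_right_lt_deriv_boundary' (B := fun t => B t + ε * E t) hf hf'
      (by simpa [E] using ha.trans (le_add_of_nonneg_right hε.le))
      (hB.add (continuous_const.mul (by fun_prop)).continuousOn)
      (fun t ht => (hB' t ht).add ((hE t).const_mul ε).hasDerivWithinAt)
      (fun t ht hft => by
        have hεE : 0 < ε * E t := mul_pos hε (hE_pos t)
        have hbound := bound t ht (by linarith)
        rw [show f t - B t = ε * E t by linarith] at hbound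
        linarith) hx
  refine le_of_forall_pos_le_add fun δ hδ => ?_
  simpa [(hE_pos x).ne'] using key (δ / E x) (div_pos hδ (hE_pos x))

theorem image_le_of_bernoulli_subsolution_supersolution {f f' B B' α : ℝ → ℝ} {a b β s : ℝ}
    (hs : 1 ≤ s) (hβ : 0 ≤ β)
    (hf : ContinuousOn f (Icc a b)) (hf' : ∀ x ∈ Ico a b, HasDerivWithinAt f (f' x) (Ici x) x)
    (ha : f a ≤ B a) (hB : ContinuousOn B (Icc a b))
    (hB' : ∀ x ∈ Ico a b, HasDerivWithinAt B (B' x) (Ici x) x)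
    (hα : ∀ x ∈ Ico a b, 0 ≤ α x) (hB_nonneg : ∀ x ∈ Ico a b, 0 ≤ B x)
    (hf_sub : ∀ x ∈ Ico a b, f' x ≤ -α x * f x + β * f x ^ s)
    (hB_super : ∀ x ∈ Ico a b, -α x * B x + β * B x ^ s ≤ B' x) :
    ∀ ⦃x⦄, x ∈ Icc a b → f x ≤ B x := by
  obtain ⟨R, hR⟩ := isCompact_Icc.bddAbove_image hf
  refine image_le_of_deriv_right_le_deriv_boundary_of_lipschitz (L := β * (s * R ^ (s - 1)))
    hf hf' ha hB hB' fun x hx hBf => ?_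
  have hfR : f x ≤ R := hR (mem_image_of_mem f (Ico_subset_Icc_self hx))
  have hpow := rpow_sub_rpow_le_mul_sub hs (hB_nonneg x hx) hBf hfR
  have hαf := mul_le_mul_of_nonneg_left hBf (hα x hx)
  linear_combination hf_sub x hx + hαf + hB_super x hx + β * hpow

noncomputable def decayProfile (lam ν t : ℝ) : ℝ := 1 / (lam * (1 + t) ^ ν)

section

variable {c₀ c₁ lam ν p q t : ℝ}

theorem decayProfile_pos (hlam : 0 < lam) (ht : 0 < 1 + t) :
    0 < decayProfile lam ν t := by
  unfold decayProfile; positivity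

theorem hasDerivAt_decayProfile_sq (hlam : lam ≠ 0) (ht : 0 < 1 + t) :
    HasDerivAt (fun t => decayProfile lam ν t ^ 2)
      (-(2 * ν / (1 + t)) * decayProfile lam ν t ^ 2) t := by
  have hrν : (1 + t) ^ ν ≠ 0 := (rpow_pos_of_pos ht ν).ne'
  have h1 : HasDerivAt (fun t : ℝ => 1 + t) 1 t := (hasDerivAt_id t).const_add 1
  have h2 := ((h1.rpow_const (p := ν) (Or.inl ht.ne')).const_mul lam).fun_inv
    (mul_ne_zero hlam hrν)
  refine ((h2.fun_pow 2).congr_deriv ?_).congr_of_eventuallyEq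
    (Filter.Eventually.of_forall fun t => by simp [decayProfile])
  norm_num [decayProfile, rpow_sub_one ht.ne']
  field_simp

theorem mul_decayProfile_rpow_add_div_le (hc₀ : 0 ≤ c₀) (hlam : 0 < lam) (hν : 0 ≤ ν) (hq1 : q ≤ 1)
    (hcond : c₀ / lam ^ (p - 1) + ν ≤ c₁) (hpν : (p - 1) * ν ≥ q) (ht : 0 ≤ t) :
    c₀ * decayProfile lam ν t ^ (p - 1) + ν / (1 + t) ≤ c₁ / (1 + t) ^ q := by
  have hr : 1 ≤ 1 + t := by linarith
  have hr0 : 0 < 1 + t := by linarith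
  have hprofile :
      decayProfile lam ν t ^ (p - 1) = 1 / lam ^ (p - 1) / (1 + t) ^ ((p - 1) * ν) := by
    rw [decayProfile, div_rpow zero_le_one (by positivity), one_rpow,
      mul_rpow hlam.le (by positivity), ← rpow_mul hr0.le, mul_comm ν, div_div]
  have hq_le : (1 + t) ^ q ≤ (1 + t) ^ ((p - 1) * ν) := rpow_le_rpow_of_exponent_le hr hpν
  have hq_le_one : (1 + t) ^ q ≤ 1 + t := by
    simpa using rpow_le_rpow_of_exponent_le hr hq1
  calc c₀ * decayProfile lam ν t ^ (p - 1) + ν / (1 + t)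
      ≤ c₀ * (1 / lam ^ (p - 1) / (1 + t) ^ q) + ν / (1 + t) ^ q := by
        rw [hprofile]; gcongr
    _ = (c₀ / lam ^ (p - 1) + ν) / (1 + t) ^ q := by ring
    _ ≤ c₁ / (1 + t) ^ q := by gcongr

theorem decayProfile_sq_supersolution (hc₀ : 0 ≤ c₀) (hlam : 0 < lam) (hν : 0 ≤ ν) (hq1 : q ≤ 1)
    (hcond : c₀ / lam ^ (p - 1) + ν ≤ c₁) (hpν : (p - 1) * ν ≥ q) (ht : 0 ≤ t) :
    -(2 * (c₁ / (1 + t) ^ q)) * decayProfile lam ν t ^ 2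
        + 2 * c₀ * (decayProfile lam ν t ^ 2) ^ ((p + 1) / 2)
      ≤ -(2 * ν / (1 + t)) * decayProfile lam ν t ^ 2 := by
  have hrate := mul_decayProfile_rpow_add_div_le hc₀ hlam hν hq1 hcond hpν ht
  set w := decayProfile lam ν t
  have hw : 0 < w := decayProfile_pos hlam (by linarith)
  have hpow : (w ^ 2) ^ ((p + 1) / 2) = w ^ (p - 1) * w ^ 2 := by
    rw [← rpow_natCast, ← rpow_mul hw.le, ← rpow_add hw]
    ring_nf
  rw [hpow]
  linear_combination (2 * w ^ 2) * hrate

end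

theorem asymptotic_decay_general_lambda_nu_general
    {H : Type*} [NormedAddCommGroup H] [InnerProductSpace ℂ H]
    (A : ℝ → H →L[ℂ] H) (F : ℝ → H → H) (u : ℝ → H)
    (hu : ∀ t : ℝ, 0 ≤ t → HasDerivAt u (A t (u t) + F t (u t)) t)
    (c₀ p : ℝ) (hc₀ : 0 < c₀) (hp : 1 < p)
    (hF : ∀ t : ℝ, 0 ≤ t → ∀ x : H, ‖F t x‖ ≤ c₀ * ‖x‖ ^ p)
    (c₁ q : ℝ) (hc₁ : 0 < c₁) (hq1 : q ≤ 1)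
    (hA : ∀ t : ℝ, 0 ≤ t → ∀ x : H,
      (inner ℂ (A t x) x : ℂ).re ≤ -(c₁ / (1 + t) ^ q) * ‖x‖ ^ 2)
    (lam ν : ℝ) (hlam : 0 < lam) (hν : 0 < ν)
    (hcond : c₀ / lam ^ (p - 1) + ν ≤ c₁)
    (hpν : (p - 1) * ν ≥ q)
    (hu0 : ‖u 0‖ ≤ 1 / lam) :
    ∀ t : ℝ, 0 ≤ t → ‖u t‖ ≤ 1 / (lam * (1 + t) ^ ν) := by
  intro T hT
  have hnorm_sq : ∀ t ∈ Icc 0 T, HasDerivAt (‖u ·‖ ^ 2)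
      (2 * (⟪A t (u t) + F t (u t), u t⟫_ℂ).re) t :=
    fun t ht => (hu t ht.1).norm_sq_re_inner_s4
  have hprofile : ∀ t ∈ Icc 0 T, HasDerivAt (fun t => decayProfile lam ν t ^ 2)
      (-(2 * ν / (1 + t)) * decayProfile lam ν t ^ 2) t :=
    fun t ht => hasDerivAt_decayProfile_sq hlam.ne' (by linarith [ht.1])
  have hinit : ‖u 0‖ ^ 2 ≤ decayProfile lam ν 0 ^ 2 := by
    simp only [decayProfile, add_zero, one_rpow, mul_one]
    gcongr
  have hbound := image_le_of_bernoulli_subsolution_supersolution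
    (α := fun t => 2 * (c₁ / (1 + t) ^ q)) (β := 2 * c₀) (s := (p + 1) / 2)
    (by linarith) (by linarith)
    (fun t ht => (hnorm_sq t ht).continuousAt.continuousWithinAt)
    (fun t ht => (hnorm_sq t (Ico_subset_Icc_self ht)).hasDerivWithinAt) hinit
    (fun t ht => (hprofile t ht).continuousAt.continuousWithinAt)
    (fun t ht => (hprofile t (Ico_subset_Icc_self ht)).hasDerivWithinAt)
    (fun t ht => by have := ht.1; positivity)
    (fun t _ => sq_nonneg _)
    (fun t ht => two_re_inner_add_le (by linarith) (hA t ht.1 (u t)) (hF t ht.1 (u t)))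
    (fun t ht => decayProfile_sq_supersolution hc₀.le hlam hν.le hq1 hcond hpν ht.1)
    ⟨hT, le_rfl⟩
  exact (pow_le_pow_iff_left₀ (norm_nonneg _) (decayProfile_pos hlam (by linarith)).le
    two_ne_zero).1 hbound

/-- **Remark 1** (Ramm). If constants `λ, ν > 0` satisfy `c₀/λ^{p-1} + ν ≤ c₁` and
`(p-1)ν ≥ q`, and `‖u 0‖ ≤ 1/λ`, then the solution of `u' = A(t)u + F(t,u)` with
`Re⟪A(t)x,x⟫ ≤ -(c₁/(1+t)^q)‖x‖²` satisfies `‖u t‖ ≤ 1/(λ(1+t)^ν)` for all `t ≥ 0`. -/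
theorem asymptotic_decay_general_lambda_nu
    {H : Type*} [NormedAddCommGroup H] [InnerProductSpace ℂ H] [CompleteSpace H]
    (A : ℝ → H →L[ℂ] H) (F : ℝ → H → H) (u : ℝ → H)
    (hu : ∀ t : ℝ, 0 ≤ t → HasDerivAt u (A t (u t) + F t (u t)) t)
    (c₀ p : ℝ) (hc₀ : 0 < c₀) (hp : 1 < p)
    (hF : ∀ t : ℝ, 0 ≤ t → ∀ x : H, ‖F t x‖ ≤ c₀ * ‖x‖ ^ p)
    (c₁ q : ℝ) (hc₁ : 0 < c₁) (hq : 0 < q) (hq1 : q ≤ 1)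
    (hA : ∀ t : ℝ, 0 ≤ t → ∀ x : H,
      (inner ℂ (A t x) x : ℂ).re ≤ -(c₁ / (1 + t) ^ q) * ‖x‖ ^ 2)
    (lam ν : ℝ) (hlam : 0 < lam) (hν : 0 < ν)
    (hcond : c₀ / lam ^ (p - 1) + ν ≤ c₁)
    (hpν : (p - 1) * ν ≥ q)
    (hu0 : ‖u 0‖ ≤ 1 / lam) :
    ∀ t : ℝ, 0 ≤ t → ‖u t‖ ≤ 1 / (lam * (1 + t) ^ ν) :=
  asymptotic_decay_general_lambda_nu_general A F u hu c₀ p hc₀ hp hF c₁ q hc₁ hq1 hA lam ν hlam hν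
    hcond hpν hu0
end

section
/- Let H be a complex Hilbert space, for each t ≥ 0 let A(t) be a bounded linear operator on H and F(t,·) : H → H, with constants c₀ > 0, p > 1 such that ‖F(t,x)‖ ≤ c₀‖x‖^p for all t ≥ 0, x ∈ H, and with a constant k > 0 such that Re⟪A(t)x, x⟫ ≤ -k‖x‖² for all t ≥ 0, x ∈ H. Then the zero solution of u' = A(t)u + F(t,u) is asymptotically stable in the Lyapunov sense: for every ε > 0 there exists δ > 0 such that every differentiable u : [0,∞) → H satisfying u'(t) = A(t)(u(t)) + F(t,u(t)) for all t ≥ 0 with ‖u(0)‖ ≤ δ satisfies sup_{t≥0} ‖u(t)‖ ≤ ε and lim_{t→∞} ‖u(t)‖ = 0. -/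
/-!
Near the origin the nonlinearity is dominated by the dissipativity of `A`: once
`c₀ r^(p-1) ≤ k/2`, every `x` with `‖x‖ ≤ r` satisfies `Re⟪A(t)x + F(t,x), x⟫ ≤ -(k/2)‖x‖²`.
While a solution stays in that ball, Grönwall's inequality for `‖u‖²` gives
`‖u(t)‖ ≤ ‖u(0)‖ e^{-kt/2}`, so starting in the ball of radius `r/2` it can never reach the
sphere of radius `r`, and the same estimate then holds for all times.
-/

open Set Filter Topology Real

theorem rpow_le_rpow_sub_one_mul {a r p : ℝ} (ha : 0 ≤ a) (har : a ≤ r) (hp : 1 ≤ p) :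
    a ^ p ≤ r ^ (p - 1) * a := by
  rcases ha.eq_or_lt with rfl | ha
  · simp [Real.zero_rpow (by linarith : p ≠ 0)]
  have hp' : 0 ≤ p - 1 := sub_nonneg.2 hp
  calc a ^ p = a ^ (p - 1) * a := by rw [← Real.rpow_add_one ha.ne', sub_add_cancel]
    _ ≤ r ^ (p - 1) * a := by gcongr

theorem exists_pos_le_mul_rpow_le {ε c a q : ℝ} (hε : 0 < ε) (ha : 0 < a) (hq : 0 < q) :
    ∃ r, 0 < r ∧ r ≤ ε ∧ c * r ^ q ≤ a := by
  have hlim : Tendsto (fun r : ℝ => c * r ^ q) (𝓝[>] 0) (𝓝 0) := by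
    simpa [Real.zero_rpow hq.ne'] using
      ((Real.continuousAt_rpow_const 0 q (Or.inr hq.le)).tendsto.const_mul c).mono_left
        nhdsWithin_le_nhds
  obtain ⟨r, hrε, hra, hr0⟩ := ((eventually_nhdsWithin_of_eventually_nhds (eventually_le_nhds hε)).and
    ((hlim.eventually (eventually_le_nhds ha)).and self_mem_nhdsWithin)).exists
  exact ⟨r, hr0, hrε, hra⟩

theorem re_inner_add_le_of_norm_le_s5 {𝕜 E : Type*} [RCLike 𝕜] [NormedAddCommGroup E]
    [InnerProductSpace 𝕜 E] {v w x : E} {c k p r : ℝ} (hc : 0 ≤ c) (hp : 1 ≤ p)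
    (hv : RCLike.re (inner 𝕜 v x) ≤ -k * ‖x‖ ^ 2) (hw : ‖w‖ ≤ c * ‖x‖ ^ p) (hx : ‖x‖ ≤ r)
    (hr : c * r ^ (p - 1) ≤ k / 2) :
    RCLike.re (inner 𝕜 (v + w) x) ≤ -(k / 2) * ‖x‖ ^ 2 := by
  have hwx : RCLike.re (inner 𝕜 w x) ≤ k / 2 * ‖x‖ ^ 2 :=
    calc RCLike.re (inner 𝕜 w x) ≤ ‖inner 𝕜 w x‖ := RCLike.re_le_norm _
      _ ≤ ‖w‖ * ‖x‖ := norm_inner_le_norm _ _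
      _ ≤ c * ‖x‖ ^ p * ‖x‖ := by gcongr
      _ ≤ c * (r ^ (p - 1) * ‖x‖) * ‖x‖ := by
        gcongr; exact rpow_le_rpow_sub_one_mul (norm_nonneg _) hx hp
      _ = c * r ^ (p - 1) * ‖x‖ ^ 2 := by ring
      _ ≤ k / 2 * ‖x‖ ^ 2 := by gcongr
  rw [inner_add_left, map_add]
  linarith

theorem norm_le_mul_exp_of_inner_deriv_le {E : Type*} [NormedAddCommGroup E]
    [InnerProductSpace ℝ E] {u f : ℝ → E} {k b : ℝ}
    (hu : ∀ t ∈ Icc 0 b, HasDerivAt u (f t) t)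
    (hf : ∀ t ∈ Ico 0 b, inner ℝ (f t) (u t) ≤ -k * ‖u t‖ ^ 2) :
    ∀ t ∈ Icc 0 b, ‖u t‖ ≤ ‖u 0‖ * exp (-k * t) := by
  intro t ht
  have hsq : ‖u t‖ ^ 2 ≤ ‖u 0‖ ^ 2 * exp (-2 * k * t) := by
    have := le_gronwallBound_of_liminf_deriv_right_le (f := (‖u ·‖ ^ 2))
      (f' := fun s => 2 * inner ℝ (u s) (f s)) (δ := ‖u 0‖ ^ 2) (K := -2 * k) (ε := 0)
      (fun s hs => (hu s hs).norm_sq.continuousAt.continuousWithinAt)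
      (fun s hs _ hr => (hu s (Ico_subset_Icc_self hs)).norm_sq.hasDerivWithinAt
        |>.liminf_right_slope_le hr)
      le_rfl
      (fun s hs => by rw [real_inner_comm]; linarith [hf s hs]) t ht
    rwa [sub_zero, gronwallBound_ε0] at this
  have hexp : exp (-2 * k * t) = exp (-k * t) ^ 2 := by rw [← Real.exp_nat_mul]; ring_nf
  rw [hexp, ← mul_pow] at hsq
  exact (pow_le_pow_iff_left₀ (norm_nonneg _) (by positivity) two_ne_zero).1 hsq

theorem forall_lt_of_forall_Ico_lt_imp_lt {φ : ℝ → ℝ} {r : ℝ} (hφ : ContinuousOn φ (Ici 0))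
    (h : ∀ b, 0 ≤ b → (∀ s ∈ Ico 0 b, φ s < r) → φ b < r) : ∀ t, 0 ≤ t → φ t < r := by
  intro t ht
  by_contra! hrt
  have hS : IsCompact (Icc 0 t ∩ φ ⁻¹' Ici r) :=
    isCompact_Icc.of_isClosed_subset
      ((hφ.mono Icc_subset_Ici_self).preimage_isClosed_of_isClosed isClosed_Icc isClosed_Ici)
      inter_subset_left
  obtain ⟨c, ⟨⟨hc0, hct⟩, hrc⟩, hmin⟩ := hS.exists_isLeast ⟨t, ⟨ht, le_rfl⟩, hrt⟩
  refine not_lt.2 hrc (h c hc0 fun s hs => lt_of_not_ge fun hrs => ?_)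
  exact (hmin ⟨⟨hs.1, hs.2.le.trans hct⟩, hrs⟩).not_gt hs.2

theorem zero_solution_asymptotically_stable_general
    {H : Type*} [NormedAddCommGroup H] [InnerProductSpace ℂ H]
    (A : ℝ → H →L[ℂ] H) (F : ℝ → H → H)
    (c₀ p : ℝ) (hc₀ : 0 < c₀) (hp : 1 < p)
    (hF : ∀ t : ℝ, 0 ≤ t → ∀ x : H, ‖F t x‖ ≤ c₀ * ‖x‖ ^ p)
    (k : ℝ) (hk : 0 < k)
    (hA : ∀ t : ℝ, 0 ≤ t → ∀ x : H, (inner ℂ (A t x) x : ℂ).re ≤ -k * ‖x‖ ^ 2) :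
    ∀ ε : ℝ, 0 < ε → ∃ δ : ℝ, 0 < δ ∧
      ∀ u : ℝ → H, (∀ t : ℝ, 0 ≤ t → HasDerivAt u (A t (u t) + F t (u t)) t) →
        ‖u 0‖ ≤ δ →
        (∀ t : ℝ, 0 ≤ t → ‖u t‖ ≤ ε) ∧
        Filter.Tendsto (fun t : ℝ => ‖u t‖) Filter.atTop (nhds 0) := by
  intro ε hε
  obtain ⟨r, hr0, hrε, hr⟩ := exists_pos_le_mul_rpow_le (c := c₀) hε (half_pos hk) (sub_pos.2 hp)
  refine ⟨r / 2, half_pos hr0, fun u hu hu0 => ?_⟩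
  -- `‖u‖²` is differentiated in the underlying real space, where `⟪x, y⟫_ℝ = Re ⟪x, y⟫_ℂ`.
  let := InnerProductSpace.rclikeToReal ℂ H
  have hdecay : ∀ b, (∀ s ∈ Ico 0 b, ‖u s‖ < r) →
      ∀ t ∈ Icc 0 b, ‖u t‖ ≤ ‖u 0‖ * exp (-(k / 2) * t) := fun b hb =>
    norm_le_mul_exp_of_inner_deriv_le (fun t ht => hu t ht.1) fun s hs =>
      re_inner_add_le_of_norm_le_s5 hc₀.le hp.le (hA s hs.1 _) (hF s hs.1 _) (hb s hs).le hr
  have hsmall : ∀ t, 0 ≤ t → ‖u t‖ < r :=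
    forall_lt_of_forall_Ico_lt_imp_lt
      (fun t ht => (hu t ht).continuousAt.norm.continuousWithinAt) fun b hb hlt =>
        calc ‖u b‖ ≤ ‖u 0‖ * exp (-(k / 2) * b) := hdecay b hlt b ⟨hb, le_rfl⟩
          _ ≤ ‖u 0‖ := mul_le_of_le_one_right (norm_nonneg _) (exp_le_one_iff.2 (by nlinarith))
          _ < r := by linarith
  refine ⟨fun t ht => (hsmall t ht).le.trans hrε, ?_⟩
  have hlim : Tendsto (fun t : ℝ => ‖u 0‖ * exp (-(k / 2) * t)) atTop (𝓝 0) := by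
    simpa using (tendsto_exp_atBot.comp
      (tendsto_id.const_mul_atTop_of_neg (by linarith : -(k / 2) < 0))).const_mul ‖u 0‖
  exact squeeze_zero' (Eventually.of_forall fun t => norm_nonneg _)
    ((eventually_ge_atTop 0).mono fun t ht =>
      hdecay t (fun s hs => hsmall s hs.1) t ⟨ht, le_rfl⟩) hlim

/-- Asymptotic stability (Lyapunov) of the zero solution of `u' = A(t)u + F(t,u)`
when `Re⟪A(t)x,x⟫ ≤ -k‖x‖²`, `k > 0`, and `‖F(t,x)‖ ≤ c₀‖x‖^p`, `p > 1`. -/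
theorem zero_solution_asymptotically_stable
    {H : Type*} [NormedAddCommGroup H] [InnerProductSpace ℂ H] [CompleteSpace H]
    (A : ℝ → H →L[ℂ] H) (F : ℝ → H → H)
    (c₀ p : ℝ) (hc₀ : 0 < c₀) (hp : 1 < p)
    (hF : ∀ t : ℝ, 0 ≤ t → ∀ x : H, ‖F t x‖ ≤ c₀ * ‖x‖ ^ p)
    (k : ℝ) (hk : 0 < k)
    (hA : ∀ t : ℝ, 0 ≤ t → ∀ x : H, (inner ℂ (A t x) x : ℂ).re ≤ -k * ‖x‖ ^ 2) :
    ∀ ε : ℝ, 0 < ε → ∃ δ : ℝ, 0 < δ ∧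
      ∀ u : ℝ → H, (∀ t : ℝ, 0 ≤ t → HasDerivAt u (A t (u t) + F t (u t)) t) →
        ‖u 0‖ ≤ δ →
        (∀ t : ℝ, 0 ≤ t → ‖u t‖ ≤ ε) ∧
        Filter.Tendsto (fun t : ℝ => ‖u t‖) Filter.atTop (nhds 0) :=
  zero_solution_asymptotically_stable_general A F c₀ p hc₀ hp hF k hk hA
end

section
/- Let A be an n×n complex matrix all of whose eigenvalues have negative real part, and let V be a positive-definite Hermitian n×n complex matrix. Then the function t ↦ 2·exp(A*t)·V·exp(At) (where A* is the conjugate transpose and exp is the matrix exponential) is integrable on [0,∞), and the matrix W = 2∫₀^∞ exp(A*t)·V·exp(At) dt is positive-definite Hermitian and satisfies the Lyapunov equation A*W + W·A = -2V. -/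
open Matrix MeasureTheory
open scoped ComplexOrder

attribute [local instance] Matrix.linftyOpNormedAddCommGroup Matrix.linftyOpNormedSpace

/-!
On the generalized eigenspace of `A` for an eigenvalue `μ`, `exp (t A)` acts as `e^{t μ}` times a
polynomial in `t`; so `exp (t A) = O(e^{-ε t})` as soon as every eigenvalue has real part `< -ε`.
When the spectra of `A` and `B` lie in the open left half-plane, `f t = exp (t B) C exp (t A)` thus
decays exponentially, and integrating `f' = B f + f A` over `[0, ∞)` shows that `X = ∫ f` solves the
Sylvester equation `B X + X A = -f 0 = -C`. For `B = Aᴴ` and `C = 2 V` the integrand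
`exp (t A)ᴴ (2 V) exp (t A)` is positive definite for every `t`, hence so is its integral.
-/

theorem Complex.integral_pos_of_forall_pos {X : Type*} [MeasurableSpace X] {μ : Measure X}
    [NeZero μ] {g : X → ℂ} (hg : Integrable g μ) (hpos : ∀ x, 0 < g x) : 0 < ∫ x, g x ∂μ := by
  simp only [Complex.pos_iff] at hpos ⊢
  have hre := integral_re hg
  have him := integral_im hg
  simp only [RCLike.re_to_complex, RCLike.im_to_complex] at hre him
  refine ⟨?_, ?_⟩
  · rw [← hre, integral_pos_iff_support_of_nonneg (fun x => (hpos x).1.le) hg.re]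
    have hsupp : Function.support (fun x => (g x).re) = Set.univ :=
      Set.eq_univ_of_forall fun x => (hpos x).1.ne'
    simp [hsupp, NeZero.ne]
  · simp [← him, ← (hpos _).2]

theorem Matrix.linfty_opNorm_le_sum_norm_col {m n α : Type*} [Fintype m] [Fintype n]
    [NormedAddCommGroup α] (M : Matrix m n α) : ‖M‖ ≤ ∑ j, ‖M.col j‖ := by
  have h : ‖M‖₊ ≤ ∑ j, ‖M.col j‖₊ := by
    rw [linfty_opNNNorm_def]
    exact Finset.sup_le fun i _ => Finset.sum_le_sum fun j _ => nnnorm_le_pi_nnnorm (M.col j) i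
  simpa only [← coe_nnnorm, ← NNReal.coe_sum] using NNReal.coe_le_coe.mpr h

section

attribute [local instance] Matrix.linftyOpNormedRing Matrix.linftyOpNormedAlgebra

open NormedSpace Asymptotics Filter Topology
open scoped Nat

-- `Matrix` carries the product topology, which equals the topology of the `linfty` norm only up to
-- unfolding instances; making the norm topology the instance lets the normed-algebra lemmas about
-- `exp`, derivatives and integrals apply.
@[reducible]
noncomputable def Matrix.linftyOpTopologicalSpace {ι : Type*} [Fintype ι] :
    TopologicalSpace (Matrix ι ι ℂ) :=
  @UniformSpace.toTopologicalSpace _ PseudoMetricSpace.toUniformSpace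

attribute [local instance] Matrix.linftyOpTopologicalSpace

namespace Matrix

variable {ι : Type*} [Fintype ι]

theorem posDef_integral {X : Type*} [MeasurableSpace X] {μ : Measure X} [NeZero μ]
    {f : X → Matrix ι ι ℂ} (hf : Integrable f μ) (hpos : ∀ x, (f x).PosDef) :
    (∫ x, f x ∂μ).PosDef := by
  have hentry : ∀ i j, (∫ x, f x ∂μ) i j = ∫ x, f x i j ∂μ := fun i j =>
    ((entryLinearMap ℂ ℂ i j).toContinuousLinearMap.integral_comp_comm hf).symm
  refine PosDef.of_dotProduct_mulVec_pos ?_ fun v hv => ?_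
  · ext i j
    rw [conjTranspose_apply, hentry, hentry, Complex.star_def, ← integral_conj]
    exact integral_congr_ae (Eventually.of_forall fun x => (hpos x).isHermitian.apply i j)
  · let q : Matrix ι ι ℂ →ₗ[ℂ] ℂ :=
      { toFun := fun M => star v ⬝ᵥ M *ᵥ v
        map_add' := fun M N => by simp [add_mulVec, dotProduct_add]
        map_smul' := fun c M => by simp [smul_mulVec] }
    change 0 < q _
    rw [← show ∫ x, q (f x) ∂μ = q (∫ x, f x ∂μ) from q.toContinuousLinearMap.integral_comp_comm hf]
    exact Complex.integral_pos_of_forall_pos (q.toContinuousLinearMap.integrable_comp hf)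
      fun x => (hpos x).dotProduct_mulVec_pos hv

variable [DecidableEq ι]

theorem exp_smul_mulVec_of_pow_mulVec_eq_zero (A : Matrix ι ι ℂ) {μ : ℂ} {k : ℕ} {x : ι → ℂ}
    (hx : (A - μ • 1) ^ k *ᵥ x = 0) (t : ℂ) :
    exp (t • A) *ᵥ x =
      Complex.exp (t * μ) • ∑ j ∈ Finset.range k, (t ^ j / j !) • ((A - μ • 1) ^ j *ᵥ x) := by
  set N := A - μ • 1
  have hsplit : t • A = algebraMap ℂ _ (t * μ) + t • N := by
    rw [Algebra.algebraMap_eq_smul_one, smul_sub, smul_smul]; abel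
  have hseries : HasSum (fun j : ℕ => (t ^ j / j !) • (N ^ j *ᵥ x)) (exp (t • N) *ᵥ x) := by
    convert (exp_series_hasSum_exp' (𝕂 := ℂ) (t • N)).map (mulVec.addMonoidHomLeft x)
      (continuous_id.matrix_mulVec continuous_const) using 1
    · funext j
      change _ = ((j !⁻¹ : ℂ) • (t • N) ^ j) *ᵥ x
      rw [smul_pow, smul_smul, smul_mulVec, div_eq_inv_mul, mul_comm]
    · rfl
  have hfinite : HasSum (fun j : ℕ => (t ^ j / j !) • (N ^ j *ᵥ x))
      (∑ j ∈ Finset.range k, (t ^ j / j !) • (N ^ j *ᵥ x)) := by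
    refine hasSum_sum_of_ne_finset_zero fun j hj => ?_
    have hpow : N ^ j = N ^ (j - k) * N ^ k := by
      rw [← pow_add, Nat.sub_add_cancel (not_lt.mp (Finset.mem_range.not.mp hj))]
    rw [hpow, ← mulVec_mulVec, hx, mulVec_zero, smul_zero]
  rw [hsplit, _root_.NormedSpace.exp_add_of_commute (Algebra.commute_algebraMap_left _ _),
    ← algebraMap_exp_comm, ← mulVec_mulVec, hseries.unique hfinite, Algebra.algebraMap_eq_smul_one,
    smul_mulVec, one_mulVec, Complex.exp_eq_exp_ℂ]

theorem isBigO_exp_smul_mulVec_of_pow_mulVec_eq_zero (A : Matrix ι ι ℂ) {μ : ℂ} {k : ℕ}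
    {x : ι → ℂ} (hx : (A - μ • 1) ^ k *ᵥ x = 0) {ε : ℝ} (hμ : μ.re < -ε) :
    (fun t : ℝ => exp ((t : ℂ) • A) *ᵥ x) =O[atTop] fun t => Real.exp (-ε * t) := by
  have hδ : 0 < -ε - μ.re := by linarith
  have hscalar : (fun t : ℝ => Complex.exp (t * μ)) =O[atTop] fun t => Real.exp (μ.re * t) :=
    isBigO_of_le _ fun t => by simp [Complex.norm_exp, mul_comm]
  have hpoly : (fun t : ℝ => ∑ j ∈ Finset.range k, ((t : ℂ) ^ j / j !) • ((A - μ • 1) ^ j *ᵥ x))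
      =O[atTop] fun t => Real.exp ((-ε - μ.re) * t) := by
    refine IsBigO.fun_sum fun j _ => IsBigO.trans (g := fun t : ℝ => t ^ j) ?_
      (isLittleO_pow_exp_pos_mul_atTop j hδ).isBigO
    refine IsBigO.of_bound ‖(A - μ • 1) ^ j *ᵥ x‖ (Eventually.of_forall fun t => ?_)
    rw [norm_smul, norm_div, norm_pow, Complex.norm_real, Complex.norm_natCast, norm_pow, mul_comm]
    gcongr
    exact div_le_self (by positivity) (Nat.one_le_cast.mpr j.factorial_pos)
  refine (hscalar.smul hpoly).congr' (Eventually.of_forall fun t => ?_)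
    (Eventually.of_forall fun t => ?_)
  · exact (exp_smul_mulVec_of_pow_mulVec_eq_zero A hx t).symm
  · dsimp only
    rw [smul_eq_mul, ← Real.exp_add]
    ring_nf

theorem isBigO_exp_smul_mulVec {A : Matrix ι ι ℂ} {ε : ℝ} (hA : ∀ μ ∈ spectrum ℂ A, μ.re < -ε)
    (x : ι → ℂ) : (fun t : ℝ => exp ((t : ℂ) • A) *ᵥ x) =O[atTop] fun t => Real.exp (-ε * t) := by
  have hx : x ∈ ⨆ μ, Module.End.maxGenEigenspace (toLinAlgEquiv' A) μ := by
    rw [Module.End.iSup_maxGenEigenspace_eq_top]; trivial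
  induction hx using Submodule.iSup_induction' with
  | mem μ x hx =>
    obtain ⟨k, hk⟩ := (Module.End.mem_maxGenEigenspace _ _ _).mp hx
    have hk' : (A - μ • 1) ^ k *ᵥ x = 0 := by
      rwa [← map_one toLinAlgEquiv', ← map_smul, ← map_sub, ← map_pow] at hk
    by_cases hx0 : x = 0
    · simpa only [hx0, mulVec_zero] using isBigO_zero _ _
    have hμ : μ ∈ spectrum ℂ A := by
      rw [← AlgEquiv.spectrum_eq toLinAlgEquiv' A]
      refine (Module.End.hasEigenvalue_of_hasGenEigenvalue (k := k) ?_).mem_spectrum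
      exact (Submodule.ne_bot_iff _).mpr ⟨x, Module.End.mem_genEigenspace_nat.mpr hk, hx0⟩
    exact isBigO_exp_smul_mulVec_of_pow_mulVec_eq_zero A hk' (hA μ hμ)
  | zero => simpa only [mulVec_zero] using isBigO_zero _ _
  | add x y _ _ hx hy => simpa [mulVec_add] using hx.add hy

theorem isBigO_exp_smul {A : Matrix ι ι ℂ} {ε : ℝ} (hA : ∀ μ ∈ spectrum ℂ A, μ.re < -ε) :
    (fun t : ℝ => exp ((t : ℂ) • A)) =O[atTop] fun t => Real.exp (-ε * t) := by
  have hcols : (fun t : ℝ => ∑ j, ‖exp ((t : ℂ) • A) *ᵥ Pi.single j 1‖) =O[atTop]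
      fun t => Real.exp (-ε * t) :=
    IsBigO.fun_sum fun j _ => (isBigO_exp_smul_mulVec hA _).norm_left
  refine (isBigO_of_le _ fun t => ?_).trans hcols
  simpa [mulVec_single_one, Real.norm_of_nonneg (Finset.sum_nonneg fun j _ => norm_nonneg _)]
    using linfty_opNorm_le_sum_norm_col _

theorem exists_pos_isBigO_exp_smul {A : Matrix ι ι ℂ} (hA : ∀ μ ∈ spectrum ℂ A, μ.re < 0) :
    ∃ ε > 0, (fun t : ℝ => exp ((t : ℂ) • A)) =O[atTop] fun t => Real.exp (-ε * t) := by
  have hε : ∀ᶠ ε in 𝓝[>] (0 : ℝ), ∀ μ ∈ spectrum ℂ A, μ.re < -ε :=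
    A.finite_spectrum.eventually_all.2 fun μ hμ => nhdsWithin_le_nhds <|
      (continuous_neg.tendsto' 0 0 neg_zero).eventually (lt_mem_nhds (hA μ hμ))
  obtain ⟨ε, hεA, hεpos⟩ := (hε.and self_mem_nhdsWithin).exists
  exact ⟨ε, hεpos, isBigO_exp_smul hεA⟩

theorem hasDerivAt_exp_smul_mul_mul_exp_smul (A B C : Matrix ι ι ℂ) (t : ℝ) :
    HasDerivAt (fun u : ℝ => exp ((u : ℂ) • B) * C * exp ((u : ℂ) • A))
      (B * (exp ((t : ℂ) • B) * C * exp ((t : ℂ) • A)) +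
        exp ((t : ℂ) • B) * C * exp ((t : ℂ) • A) * A) t := by
  have hB := hasDerivAt_exp_smul_const' (𝕂 := ℝ) B t
  have hA := hasDerivAt_exp_smul_const (𝕂 := ℝ) A t
  simp only [RCLike.real_smul_eq_coe_smul (K := ℂ)] at hA hB
  refine ((hB.mul_const C).mul hA).congr_deriv ?_
  noncomm_ring

theorem isBigO_exp_smul_mul_mul_exp_smul {A B : Matrix ι ι ℂ} (C : Matrix ι ι ℂ)
    (hA : ∀ μ ∈ spectrum ℂ A, μ.re < 0) (hB : ∀ μ ∈ spectrum ℂ B, μ.re < 0) :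
    ∃ ε > 0, (fun t : ℝ => exp ((t : ℂ) • B) * C * exp ((t : ℂ) • A)) =O[atTop]
      fun t => Real.exp (-ε * t) := by
  obtain ⟨εA, hεA, hOA⟩ := exists_pos_isBigO_exp_smul hA
  obtain ⟨εB, hεB, hOB⟩ := exists_pos_isBigO_exp_smul hB
  refine ⟨εB + εA, by positivity,
    ((hOB.mul (isBigO_const_one ℝ C atTop)).mul hOA).congr_right fun t => ?_⟩
  rw [mul_one, ← Real.exp_add]
  ring_nf

theorem integrableOn_exp_smul_mul_mul_exp_smul {A B : Matrix ι ι ℂ} (C : Matrix ι ι ℂ)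
    (hA : ∀ μ ∈ spectrum ℂ A, μ.re < 0) (hB : ∀ μ ∈ spectrum ℂ B, μ.re < 0) :
    IntegrableOn (fun t : ℝ => exp ((t : ℂ) • B) * C * exp ((t : ℂ) • A)) (Set.Ici 0) := by
  obtain ⟨ε, hε, hO⟩ := isBigO_exp_smul_mul_mul_exp_smul C hA hB
  have hcont : Continuous fun t : ℝ => exp ((t : ℂ) • B) * C * exp ((t : ℂ) • A) :=
    continuous_iff_continuousAt.2 fun t =>
      (hasDerivAt_exp_smul_mul_mul_exp_smul A B C t).continuousAt
  exact (hcont.continuousOn.locallyIntegrableOn measurableSet_Ici).integrableOn_of_isBigO_atTop hO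
    ⟨Set.Ioi 0, Ioi_mem_atTop 0, exp_neg_integrableOn_Ioi 0 hε⟩

theorem sylvester_integral {A B : Matrix ι ι ℂ} (C : Matrix ι ι ℂ)
    (hA : ∀ μ ∈ spectrum ℂ A, μ.re < 0) (hB : ∀ μ ∈ spectrum ℂ B, μ.re < 0) :
    B * (∫ t in Set.Ici (0 : ℝ), exp ((t : ℂ) • B) * C * exp ((t : ℂ) • A)) +
      (∫ t in Set.Ici (0 : ℝ), exp ((t : ℂ) • B) * C * exp ((t : ℂ) • A)) * A = -C := by
  set f := fun t : ℝ => exp ((t : ℂ) • B) * C * exp ((t : ℂ) • A)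
  have hint : IntegrableOn f (Set.Ici 0) := integrableOn_exp_smul_mul_mul_exp_smul C hA hB
  have hderiv := hasDerivAt_exp_smul_mul_mul_exp_smul A B C
  obtain ⟨ε, hε, hO⟩ := isBigO_exp_smul_mul_mul_exp_smul C hA hB
  have hdecay : Tendsto f atTop (𝓝 0) := hO.trans_tendsto <|
    Real.tendsto_exp_atBot.comp (tendsto_id.const_mul_atTop_of_neg (neg_lt_zero.mpr hε))
  let L : Matrix ι ι ℂ →L[ℂ] Matrix ι ι ℂ :=
    ContinuousLinearMap.mul ℂ _ B + (ContinuousLinearMap.mul ℂ _).flip A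
  have hftc : ∫ t in Set.Ioi 0, L (f t) = 0 - f 0 :=
    integral_Ioi_of_hasDerivAt_of_tendsto (hderiv 0).continuousAt.continuousWithinAt
      (fun t _ => hderiv t) (L.integrable_comp (hint.mono_set Set.Ioi_subset_Ici_self)) hdecay
  show L (∫ t in Set.Ici 0, f t) = -C
  rw [← L.integral_comp_comm hint, integral_Ici_eq_integral_Ioi, hftc]
  simp [f]

end Matrix

end

theorem Matrix.posDef_exp_smul_conjTranspose_mul_mul_exp_smul {ι : Type*} [Fintype ι]
    [DecidableEq ι] {A V : Matrix ι ι ℂ} (hV : V.PosDef) (t : ℝ) :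
    (NormedSpace.exp ((t : ℂ) • Aᴴ) * V * NormedSpace.exp ((t : ℂ) • A)).PosDef := by
  have hexp : NormedSpace.exp ((t : ℂ) • Aᴴ) = (NormedSpace.exp ((t : ℂ) • A))ᴴ := by
    rw [← exp_conjTranspose, conjTranspose_smul, Complex.star_def, Complex.conj_ofReal]
  rw [hexp]
  exact hV.conjTranspose_mul_mul_same (mulVec_injective_iff_isUnit.mpr (isUnit_exp _))

/-- If all eigenvalues of the complex `n×n` matrix `A` have negative real part and
`V` is Hermitian positive definite, then `t ↦ 2 exp(A*t) V exp(At)` is integrable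
on `[0,∞)`, and `W = 2∫₀^∞ exp(A*t) V exp(At) dt` is Hermitian positive definite
and solves the Lyapunov equation `A*W + WA = -2V`. -/
theorem lyapunov_equation_solution
    {n : ℕ} (A V : Matrix (Fin n) (Fin n) ℂ)
    (hA : ∀ z : ℂ, A.charpoly.IsRoot z → z.re < 0)
    (hV : V.PosDef) :
    @IntegrableOn ℝ (Matrix (Fin n) (Fin n) ℂ) _ _ SeminormedAddGroup.toContinuousENorm
      (fun t : ℝ => (2 : ℂ) •
        (NormedSpace.exp ((t : ℂ) • Aᴴ) * V * NormedSpace.exp ((t : ℂ) • A)))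
      (Set.Ici 0) volume ∧
    ∀ W : Matrix (Fin n) (Fin n) ℂ,
      W = ∫ t : ℝ in Set.Ici 0, (2 : ℂ) •
        (NormedSpace.exp ((t : ℂ) • Aᴴ) * V * NormedSpace.exp ((t : ℂ) • A)) →
      W.PosDef ∧ Aᴴ * W + W * A = -(2 : ℂ) • V := by
  have hspec : ∀ μ ∈ spectrum ℂ A, μ.re < 0 := fun μ hμ =>
    hA μ (mem_spectrum_iff_isRoot_charpoly.mp hμ)
  have hspec_conj : ∀ μ ∈ spectrum ℂ Aᴴ, μ.re < 0 := fun μ hμ => by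
    rw [← star_eq_conjTranspose, spectrum.map_star] at hμ
    simpa using hspec _ hμ
  have hsmul : (fun t : ℝ => (2 : ℂ) •
        (NormedSpace.exp ((t : ℂ) • Aᴴ) * V * NormedSpace.exp ((t : ℂ) • A))) = fun t : ℝ =>
      NormedSpace.exp ((t : ℂ) • Aᴴ) * ((2 : ℂ) • V) * NormedSpace.exp ((t : ℂ) • A) := by
    funext t
    rw [mul_smul_comm, smul_mul_assoc]
  rw [hsmul]
  have hint := integrableOn_exp_smul_mul_mul_exp_smul ((2 : ℂ) • V) hspec hspec_conj
  have : NeZero (volume.restrict (Set.Ici (0 : ℝ))) := ⟨by simp [Measure.restrict_eq_zero]⟩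
  refine ⟨hint, fun W hW => ⟨?_, ?_⟩⟩
  · rw [hW]
    exact posDef_integral hint (posDef_exp_smul_conjTranspose_mul_mul_exp_smul (hV.smul two_pos))
  · rw [hW, neg_smul]
    exact sylvester_integral ((2 : ℂ) • V) hspec hspec_conj
end

section
/- Let H be a complex Hilbert space, for each t ≥ 0 let A(t) be a bounded linear operator on H, depending continuously on t, and let F(t,·) : H → H satisfy ‖F(t,x)‖ ≤ c₀‖x‖^p for all t ≥ 0, x ∈ H, with constants c₀ > 0, p > 1. Assume there are constants N > 0 and a > 0 such that every differentiable v : [0,∞) → H satisfying v'(t) = A(t)(v(t)) for all t obeys ‖v(t)‖ ≤ N·e^{-a(t-s)}·‖v(s)‖ for all t ≥ s ≥ 0. Then the zero solution of u' = A(t)u + F(t,u) is asymptotically stable: for every ε > 0 there exists δ > 0 such that every differentiable u : [0,∞) → H satisfying u'(t) = A(t)(u(t)) + F(t,u(t)) for all t ≥ 0 with ‖u(0)‖ ≤ δ satisfies sup_{t≥0} ‖u(t)‖ ≤ ε and lim_{t→∞} ‖u(t)‖ = 0. -/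
/-!
Since `F` is not assumed measurable, variation of constants is replaced by a comparison argument.
Fix `t` and let `V s` be the solution of `v' = A(t) v` with `V s s = u s`. The function
`s ↦ e^{at} ‖V s t‖` is continuous on `[0, t]`, is at most `N ‖u 0‖` at `s = 0`, equals
`e^{at} ‖u t‖` at `s = t`, and by the Bohl bound applied to `V s' - V s` its right Dini derivative
is at most `N e^{as} ‖F(s, u s)‖`. Hence `e^{at} ‖u t‖ ≤ N ‖u 0‖ + ∫₀ᵗ N e^{as} c₀ ‖u s‖^p ds`.
As long as `‖u‖ ≤ m` with `N c₀ m^{p-1} = a / 2`, Grönwall's inequality turns this into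
`‖u t‖ ≤ N ‖u 0‖ e^{-at/2}`, so if `N ‖u 0‖ ≤ m / 2` then `‖u‖` can never reach `m`.
-/

open Set Filter Topology Real

section IntegralCurves

variable {E : Type*} [NormedAddCommGroup E] [NormedSpace ℝ E] {γ γ₁ γ₂ : ℝ → E}
  {v : ℝ → E → E} {s t : Set ℝ} {α m β : ℝ}

lemma IsIntegralCurveOn.congr (h : IsIntegralCurveOn γ v s) (heq : EqOn γ₁ γ s) :
    IsIntegralCurveOn γ₁ v s := fun t ht =>
  heq ht ▸ (h t ht).congr heq (heq ht)

lemma IsIntegralCurveOn.union_of_isClosed (hs : IsIntegralCurveOn γ v s)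
    (ht : IsIntegralCurveOn γ v t) (hs' : IsClosed s) (ht' : IsClosed t) :
    IsIntegralCurveOn γ v (s ∪ t) := by
  intro x _
  have piece : ∀ {u : Set ℝ}, IsIntegralCurveOn γ v u → IsClosed u →
      HasDerivWithinAt γ (v x (γ x)) u x := fun {u} h hu => by
    by_cases hx : x ∈ u
    · exact h x hx
    · exact HasFDerivWithinAt.of_notMem_closure (by rwa [hu.closure_eq])
  exact (piece hs hs').union (piece ht ht')

lemma IsIntegralCurveOn.ite_Icc (h₁ : IsIntegralCurveOn γ₁ v (Icc α m))
    (h₂ : IsIntegralCurveOn γ₂ v (Icc m β)) (hm : γ₁ m = γ₂ m) (hαm : α ≤ m) (hmβ : m ≤ β) :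
    IsIntegralCurveOn (fun t => if t ≤ m then γ₁ t else γ₂ t) v (Icc α β) := by
  rw [← Icc_union_Icc_eq_Icc hαm hmβ]
  refine (h₁.congr fun t ht => if_pos ht.2).union_of_isClosed
    (h₂.congr fun t ht => ?_) isClosed_Icc isClosed_Icc
  rcases ht.1.eq_or_lt with rfl | hlt
  · simp [hm]
  · exact if_neg hlt.not_ge

def IVPSolvableOn (v : ℝ → E → E) (s : Set ℝ) : Prop :=
  ∀ t₀ ∈ s, ∀ x₀ : E, ∃ γ : ℝ → E, γ t₀ = x₀ ∧ IsIntegralCurveOn γ v s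

lemma IVPSolvableOn.Icc_union_Icc (h₁ : IVPSolvableOn v (Icc α m))
    (h₂ : IVPSolvableOn v (Icc m β)) (hαm : α ≤ m) (hmβ : m ≤ β) :
    IVPSolvableOn v (Icc α β) := by
  intro t₀ ht₀ x₀
  rcases le_total t₀ m with htm | hmt
  · obtain ⟨γ₁, hγ₁, h₁⟩ := h₁ t₀ ⟨ht₀.1, htm⟩ x₀
    obtain ⟨γ₂, hγ₂, h₂⟩ := h₂ m ⟨le_rfl, hmβ⟩ (γ₁ m)
    exact ⟨_, by simp [htm, hγ₁], h₁.ite_Icc h₂ hγ₂.symm hαm hmβ⟩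
  · obtain ⟨γ₂, hγ₂, h₂⟩ := h₂ t₀ ⟨hmt, ht₀.2⟩ x₀
    obtain ⟨γ₁, hγ₁, h₁⟩ := h₁ m ⟨hαm, le_rfl⟩ (γ₂ m)
    refine ⟨_, ?_, h₁.ite_Icc h₂ hγ₁ hαm hmβ⟩
    rcases hmt.eq_or_lt with rfl | hlt
    · simp [hγ₁, hγ₂]
    · simp [hlt.not_ge, hγ₂]

variable {A : ℝ → E →L[ℝ] E}

lemma ivpSolvableOn_Icc_linear_of_norm_le [CompleteSpace E] (hA : ContinuousOn A (Icc α β))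
    {M : NNReal} (hM : ∀ t ∈ Icc α β, ‖A t‖₊ ≤ M) (hlen : M * (β - α) ≤ 1 / 2) :
    IVPSolvableOn (fun t x => A t x) (Icc α β) := by
  intro t₀ ht₀ x₀
  have hPL : IsPicardLindelof (fun t x => A t x) (⟨t₀, ht₀⟩ : Icc α β) x₀
      (‖x₀‖₊ + 1) 0 (M * (2 * ‖x₀‖₊ + 1)) M := by
    refine ⟨fun t ht => ((A t).lipschitz.weaken (hM t ht)).lipschitzOnWith,
      fun x _ => hA.clm_apply continuousOn_const, fun t ht x hx => ?_, ?_⟩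
    · have hx : ‖x‖ ≤ 2 * ‖x₀‖ + 1 := by
        have := norm_le_of_mem_closedBall hx
        push_cast at this
        linarith
      calc ‖A t x‖ ≤ ‖A t‖ * ‖x‖ := (A t).le_opNorm x
        _ ≤ M * (2 * ‖x₀‖ + 1) := mul_le_mul (hM t ht) hx (norm_nonneg _) M.2
    · have hmax : max (β - t₀) (t₀ - α) ≤ β - α :=
        max_le (by linarith [ht₀.1]) (by linarith [ht₀.2])
      push_cast
      calc (M : ℝ) * (2 * ‖x₀‖ + 1) * max (β - t₀) (t₀ - α)
          ≤ M * (β - α) * (2 * ‖x₀‖ + 1) := by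
            rw [mul_right_comm]; gcongr
        _ ≤ 1 / 2 * (2 * ‖x₀‖ + 1) := by gcongr
        _ ≤ ‖x₀‖ + 1 - 0 := by linarith
  exact hPL.exists_eq_forall_mem_Icc_hasDerivWithinAt₀

lemma ivpSolvableOn_Icc_linear [CompleteSpace E] (hA : ContinuousOn A (Icc α β)) :
    IVPSolvableOn (fun t x => A t x) (Icc α β) := by
  obtain ⟨M, hM⟩ := (isCompact_Icc.image_of_continuousOn hA.nnnorm).bddAbove
  replace hM : ∀ t ∈ Icc α β, ‖A t‖₊ ≤ M := fun t ht => hM (mem_image_of_mem _ ht)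
  set τ : ℝ := (2 * M + 1)⁻¹
  have hτ : 0 < τ := by positivity
  have hMτ : M * τ ≤ 1 / 2 := by rw [mul_inv_le_iff₀ (by positivity)]; linarith
  have key : ∀ n : ℕ, ∀ b ∈ Icc α β, b - α ≤ n * τ →
      IVPSolvableOn (fun t x => A t x) (Icc α b) := by
    intro n
    induction n with
    | zero =>
      intro b hb hlen
      refine ivpSolvableOn_Icc_linear_of_norm_le (hA.mono (Icc_subset_Icc le_rfl hb.2))
        (fun t ht => hM t ⟨ht.1, ht.2.trans hb.2⟩) ?_
      push_cast at hlen
      nlinarith [M.2]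
    | succ n ih =>
      intro b hb hlen
      set c := max α (b - τ)
      have hc : c ∈ Icc α β := ⟨le_max_left _ _, max_le (hb.1.trans hb.2) (by linarith [hb.2])⟩
      have hcb : c ≤ b := max_le hb.1 (by linarith)
      refine (ih c hc ?_).Icc_union_Icc (ivpSolvableOn_Icc_linear_of_norm_le
        (hA.mono (Icc_subset_Icc hc.1 hb.2))
        (fun t ht => hM t ⟨hc.1.trans ht.1, ht.2.trans hb.2⟩) ?_) hc.1 hcb
      · push_cast at hlen
        have : c ≤ α + n * τ := max_le (by have := n.cast_nonneg (α := ℝ); nlinarith) (by linarith)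
        linarith
      · calc (M : ℝ) * (b - c) ≤ M * τ := by gcongr; linarith [le_max_right α (b - τ)]
          _ ≤ 1 / 2 := hMτ
  intro t₀ ht₀
  obtain ⟨n, hn⟩ := exists_nat_ge ((β - α) / τ)
  exact key n β ⟨ht₀.1.trans ht₀.2, le_rfl⟩ (by rwa [div_le_iff₀ hτ] at hn) t₀ ht₀

lemma IsIntegralCurveOn.eqOn_Icc_of_linear (hA : ContinuousOn A (Icc α β))
    (h₁ : IsIntegralCurveOn γ₁ (fun t x => A t x) (Icc α β))
    (h₂ : IsIntegralCurveOn γ₂ (fun t x => A t x) (Icc α β)) {t₀ : ℝ} (ht₀ : t₀ ∈ Ioo α β)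
    (h : γ₁ t₀ = γ₂ t₀) : EqOn γ₁ γ₂ (Icc α β) := by
  obtain ⟨K, hK⟩ := (isCompact_Icc.image_of_continuousOn hA.nnnorm).bddAbove
  have hderiv : ∀ {γ}, IsIntegralCurveOn γ (fun t x => A t x) (Icc α β) →
      ∀ t ∈ Ioo α β, HasDerivAt γ (A t (γ t)) t := fun hγ t ht =>
    (hγ t (Ioo_subset_Icc_self ht)).hasDerivAt (Icc_mem_nhds ht.1 ht.2)
  exact ODE_solution_unique_of_mem_Icc (s := fun _ => univ)
    (fun t ht => ((A t).lipschitz.weaken (hK (mem_image_of_mem _ (Ioo_subset_Icc_self ht))))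
      |>.lipschitzOnWith) ht₀ h₁.continuousOn
    (hderiv h₁) (fun _ _ => mem_univ _) h₂.continuousOn (hderiv h₂) (fun _ _ => mem_univ _) h

theorem exists_isIntegralCurve_linear [CompleteSpace E] (hA : Continuous A) (t₀ : ℝ)
    (x₀ : E) : ∃ γ : ℝ → E, γ t₀ = x₀ ∧ IsIntegralCurve γ (fun t x => A t x) := by
  have mem_of_abs_le : ∀ {r R : ℝ}, |r - t₀| ≤ R → r ∈ Icc (t₀ - R) (t₀ + R) := fun h => by
    rw [abs_le] at h; constructor <;> linarith
  choose! W hW₀ hW using fun (R : ℝ) (hR : 0 < R) =>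
    ivpSolvableOn_Icc_linear hA.continuousOn t₀ (mem_of_abs_le (by simpa using hR.le)) x₀
  have hcons : ∀ R R', 0 < R → R ≤ R' → EqOn (W R) (W R') (Icc (t₀ - R) (t₀ + R)) :=
    fun R R' hR hRR' =>
      (hW R hR).eqOn_Icc_of_linear hA.continuousOn
        ((hW R' (hR.trans_le hRR')).mono (Icc_subset_Icc (by linarith) (by linarith)))
        ⟨by linarith, by linarith⟩ ((hW₀ R hR).trans (hW₀ R' (hR.trans_le hRR')).symm)
  refine ⟨fun t => W (|t - t₀| + 1) t, hW₀ _ (by positivity), fun t => ?_⟩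
  set R := |t - t₀| + 1
  have hR : 0 < R := by positivity
  have hWR : HasDerivAt (W R) (A t (W R t)) t :=
    hW R hR t (mem_of_abs_le (by linarith)) |>.hasDerivAt <|
      Icc_mem_nhds (by linarith [neg_abs_le (t - t₀)]) (by linarith [le_abs_self (t - t₀)])
  refine hWR.congr_of_eventuallyEq ?_
  filter_upwards [Ioo_mem_nhds (show t - 1 < t by linarith) (show t < t + 1 by linarith)]
    with r hr
  have hrt : |r - t₀| < R := by
    have := abs_sub_le r t t₀
    have : |r - t| < 1 := abs_sub_lt_iff.mpr ⟨by linarith [hr.2], by linarith [hr.1]⟩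
    linarith
  rcases le_total (|r - t₀| + 1) R with h | h
  · exact hcons _ R (by positivity) h (mem_of_abs_le (by linarith))
  · exact (hcons R _ hR h (mem_of_abs_le hrt.le)).symm

theorem exists_forall_hasDerivAt_of_continuousOn_Ici [CompleteSpace E]
    (hA : ContinuousOn A (Ici 0)) (t₀ : ℝ) (x₀ : E) :
    ∃ v : ℝ → E, v t₀ = x₀ ∧ ∀ t, 0 ≤ t → HasDerivAt v (A t (v t)) t := by
  obtain ⟨v, hv₀, hv⟩ := exists_isIntegralCurve_linear (A := fun t => A (max t 0))
    (hA.comp_continuous (continuous_id.max continuous_const) fun t => le_max_right t 0) t₀ x₀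
  exact ⟨v, hv₀, fun t ht => by simpa [max_eq_left ht] using hv t⟩

end IntegralCurves

lemma continuousOn_of_dist_le_add {α β γ : Type*} [PseudoMetricSpace α] [PseudoMetricSpace β]
    [PseudoMetricSpace γ] {g : α → β} {h : α → γ} {s : Set α} {C D : ℝ} (hh : ContinuousOn h s)
    (H : ∀ x ∈ s, ∀ y ∈ s, dist (g x) (g y) ≤ C * dist (h x) (h y) + D * dist x y) :
    ContinuousOn g s := by
  intro x hx
  rw [ContinuousWithinAt, tendsto_iff_dist_tendsto_zero]
  have hlim : Tendsto (fun y => C * dist (h y) (h x) + D * dist y x) (𝓝[s] x) (𝓝 0) := by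
    simpa using ((tendsto_iff_dist_tendsto_zero.mp (hh x hx)).const_mul C).add
      ((tendsto_iff_dist_tendsto_zero.mp (continuousWithinAt_id (s := s) (x := x))).const_mul D)
  exact squeeze_zero' (Eventually.of_forall fun _ => dist_nonneg)
    (eventually_mem_nhdsWithin.mono fun y hy => H y hy x hx) hlim

lemma le_mul_exp_of_le_add_integral {z : ℝ → ℝ} {C K b : ℝ} (hz : Continuous z) (hK : 0 ≤ K)
    (h : ∀ t ∈ Icc 0 b, z t ≤ C + K * ∫ s in 0..t, z s) :
    ∀ t ∈ Icc 0 b, z t ≤ C * exp (K * t) := by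
  intro t ht
  have hY : ∀ x, HasDerivAt (fun x => ∫ s in 0..x, z s) (z x) x := fun x =>
    (hz.integral_hasStrictDerivAt 0 x).hasDerivAt
  have hgw := le_gronwallBound_of_liminf_deriv_right_le (δ := 0) (ε := C)
    (HasDerivAt.continuousOn fun x _ => hY x)
    (fun x _ r hr => (hY x).hasDerivWithinAt.liminf_right_slope_le hr) (by simp)
    (fun x hx => by linarith [h x (Ico_subset_Icc_self hx)]) t ht
  rw [sub_zero] at hgw
  calc z t ≤ C + K * ∫ s in 0..t, z s := h t ht
    _ ≤ C + K * gronwallBound 0 K C t := by gcongr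
    _ = C * exp (K * t) := by
      rcases hK.eq_or_lt with rfl | hKpos
      · simp [gronwallBound_K0]
      · rw [gronwallBound_of_K_ne_0 hKpos.ne']; field_simp; ring

lemma forall_lt_of_continuousOn_Ici {g : ℝ → ℝ} {m : ℝ} (hg : ContinuousOn g (Ici 0))
    (h0 : g 0 ≤ m) (h : ∀ b, 0 ≤ b → (∀ s ∈ Icc 0 b, g s ≤ m) → g b < m) :
    ∀ s, 0 ≤ s → g s < m := by
  by_contra! hcon
  obtain ⟨s₁, hs₁, hms₁⟩ := hcon
  have hK : IsCompact (Icc 0 s₁ ∩ g ⁻¹' Ici m) :=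
    isCompact_Icc.of_isClosed_subset ((hg.mono Icc_subset_Ici_self).preimage_isClosed_of_isClosed
      isClosed_Icc isClosed_Ici) inter_subset_left
  obtain ⟨c, ⟨hc, hmc⟩, hleast⟩ := hK.exists_isLeast ⟨s₁, ⟨hs₁, le_rfl⟩, hms₁⟩
  have hbefore : ∀ s ∈ Ico 0 c, g s < m := fun s hs => lt_of_not_ge fun hms =>
    hs.2.not_ge (hleast ⟨⟨hs.1, hs.2.le.trans hc.2⟩, hms⟩)
  have hgc : g c ≤ m := by
    rcases hc.1.eq_or_lt with hc0 | hcpos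
    · rwa [← hc0]
    · refine ContinuousWithinAt.closure_le ?_ ((hg c hc.1).mono Ico_subset_Ici_self)
        continuousWithinAt_const fun s hs => (hbefore s hs).le
      rw [closure_Ico hcpos.ne]
      exact right_mem_Icc.mpr hc.1
  refine (h c hc.1 fun s hs => ?_).not_ge hmc
  rcases hs.2.lt_or_eq with hsc | rfl
  · exact (hbefore s ⟨hs.1, hsc⟩).le
  · exact hgc

lemma Real.rpow_le_rpow_sub_one_mul_self {x m p : ℝ} (hx : 0 ≤ x) (hxm : x ≤ m) (hp : 1 ≤ p) :
    x ^ p ≤ m ^ (p - 1) * x :=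
  calc x ^ p = x ^ (p - 1 + 1) := by ring_nf
    _ = x ^ (p - 1) * x := by rw [rpow_add' hx (by linarith), rpow_one]
    _ ≤ m ^ (p - 1) * x := by gcongr

section BohlExponent

variable {E : Type*} [NormedAddCommGroup E] [NormedSpace ℝ E]

/-- The upper Bohl exponent of `v' = A(t) v` on `[0, ∞)` is at most `-a`. -/
def UniformExpDecay (A : ℝ → E →L[ℝ] E) (N a : ℝ) : Prop :=
  ∀ v : ℝ → E, (∀ t, 0 ≤ t → HasDerivAt v (A t (v t)) t) →
    ∀ s t, 0 ≤ s → s ≤ t → ‖v t‖ ≤ N * exp (-a * (t - s)) * ‖v s‖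

namespace UniformExpDecay

variable {A : ℝ → E →L[ℝ] E} {N a s t : ℝ} {u f v v₁ v₂ : ℝ → E} {V : ℝ → ℝ → E}

lemma mono (h : UniformExpDecay A N a) {N' : ℝ} (hN : N ≤ N') : UniformExpDecay A N' a :=
  fun v hv s t hs hst => (h v hv s t hs hst).trans (by gcongr)

lemma exp_mul_norm_le (h : UniformExpDecay A N a) (hv : ∀ t, 0 ≤ t → HasDerivAt v (A t (v t)) t)
    (hs : 0 ≤ s) (hst : s ≤ t) : exp (a * t) * ‖v t‖ ≤ N * exp (a * s) * ‖v s‖ := by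
  have hexp : exp (a * t) * exp (-a * (t - s)) = exp (a * s) := by rw [← exp_add]; ring_nf
  calc exp (a * t) * ‖v t‖ ≤ exp (a * t) * (N * exp (-a * (t - s)) * ‖v s‖) := by
        gcongr; exact h v hv s t hs hst
    _ = N * exp (a * s) * ‖v s‖ := by rw [← hexp]; ring

lemma exp_mul_norm_sub_le (h : UniformExpDecay A N a)
    (hv₁ : ∀ t, 0 ≤ t → HasDerivAt v₁ (A t (v₁ t)) t)
    (hv₂ : ∀ t, 0 ≤ t → HasDerivAt v₂ (A t (v₂ t)) t) (hs : 0 ≤ s) (hst : s ≤ t) :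
    exp (a * t) * ‖v₁ t - v₂ t‖ ≤ N * exp (a * s) * ‖v₁ s - v₂ s‖ :=
  h.exp_mul_norm_le (v := v₁ - v₂) (fun t ht => by simpa using (hv₁ t ht).sub (hv₂ t ht)) hs hst

lemma norm_le (h : UniformExpDecay A N a) (hN : 0 ≤ N) (ha : 0 ≤ a)
    (hv : ∀ t, 0 ≤ t → HasDerivAt v (A t (v t)) t) (hs : 0 ≤ s) (hst : s ≤ t) :
    ‖v t‖ ≤ N * ‖v s‖ :=
  calc ‖v t‖ ≤ N * exp (-a * (t - s)) * ‖v s‖ := h v hv s t hs hst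
    _ ≤ N * 1 * ‖v s‖ := by gcongr; exact exp_le_one_iff.mpr (by nlinarith)
    _ = N * ‖v s‖ := by rw [mul_one]

lemma norm_sub_le (h : UniformExpDecay A N a) (hN : 0 ≤ N) (ha : 0 ≤ a)
    (hv : ∀ t, 0 ≤ t → HasDerivAt v (A t (v t)) t) {M : ℝ} (hs : 0 ≤ s) (hst : s ≤ t)
    (hM : ∀ r ∈ Icc s t, ‖A r‖ ≤ M) : ‖v t - v s‖ ≤ M * (N * ‖v s‖) * (t - s) := by
  refine norm_image_sub_le_of_norm_deriv_le_segment'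
    (fun r hr => (hv r (hs.trans hr.1)).hasDerivWithinAt) (fun r hr => ?_) t ⟨hst, le_rfl⟩
  have hr : r ∈ Icc s t := Ico_subset_Icc_self hr
  calc ‖A r (v r)‖ ≤ ‖A r‖ * ‖v r‖ := (A r).le_opNorm _
    _ ≤ M * (N * ‖v s‖) := mul_le_mul (hM r hr) (h.norm_le hN ha hv hs hr.1) (norm_nonneg _)
        ((norm_nonneg _).trans (hM r hr))

lemma exp_mul_norm_sub_le_of_family (h : UniformExpDecay A N a) (hN : 0 ≤ N) (ha : 0 ≤ a)
    (hV : ∀ s r, 0 ≤ r → HasDerivAt (V s) (A r (V s r)) r) (hVu : ∀ s, V s s = u s)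
    {z₁ z₂ M B : ℝ} (hz₁ : 0 ≤ z₁) (h12 : z₁ ≤ z₂) (h2t : z₂ ≤ t)
    (hM : ∀ r ∈ Icc 0 t, ‖A r‖ ≤ M) (hB : ∀ r ∈ Icc 0 t, ‖u r‖ ≤ B) :
    exp (a * t) * ‖V z₂ t - V z₁ t‖ ≤
      N * exp (a * t) * ‖u z₂ - u z₁‖ + N * exp (a * t) * (M * (N * B)) * (z₂ - z₁) := by
  have hz₁t : z₁ ∈ Icc 0 t := ⟨hz₁, h12.trans h2t⟩
  have hdrift : ‖V z₁ z₂ - u z₁‖ ≤ M * (N * B) * (z₂ - z₁) := by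
    have := h.norm_sub_le hN ha (hV z₁) hz₁ h12
      fun r hr => hM r ⟨hz₁.trans hr.1, hr.2.trans h2t⟩
    rw [hVu] at this
    refine this.trans ?_
    have := (norm_nonneg _).trans (hM z₁ hz₁t)
    gcongr
    exact hB z₁ hz₁t
  calc exp (a * t) * ‖V z₂ t - V z₁ t‖ ≤ N * exp (a * z₂) * ‖u z₂ - V z₁ z₂‖ := by
        simpa only [hVu] using h.exp_mul_norm_sub_le (hV z₂) (hV z₁) (hz₁.trans h12) h2t
    _ ≤ N * exp (a * t) * (‖u z₂ - u z₁‖ + ‖V z₁ z₂ - u z₁‖) := by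
        rw [norm_sub_rev (V z₁ z₂)]
        gcongr
        exact norm_sub_le_norm_sub_add_norm_sub _ _ _
    _ ≤ _ := by
        have := mul_le_mul_of_nonneg_left hdrift (by positivity : 0 ≤ N * exp (a * t))
        linarith

lemma continuousOn_exp_mul_norm_family (h : UniformExpDecay A N a) (hN : 0 ≤ N) (ha : 0 ≤ a)
    (hA : ContinuousOn A (Icc 0 t)) (hu : ContinuousOn u (Icc 0 t))
    (hV : ∀ s r, 0 ≤ r → HasDerivAt (V s) (A r (V s r)) r) (hVu : ∀ s, V s s = u s) :
    ContinuousOn (fun s => exp (a * t) * ‖V s t‖) (Icc 0 t) := by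
  obtain ⟨M, hM⟩ := isCompact_Icc.exists_bound_of_continuousOn hA
  obtain ⟨B, hB⟩ := isCompact_Icc.exists_bound_of_continuousOn hu
  have key : ∀ x ∈ Icc 0 t, ∀ y ∈ Icc 0 t, y ≤ x →
      dist (exp (a * t) * ‖V x t‖) (exp (a * t) * ‖V y t‖) ≤
        N * exp (a * t) * dist (u x) (u y) + N * exp (a * t) * (M * (N * B)) * dist x y := by
    intro x hx y hy hyx
    rw [dist_eq_norm, dist_eq_norm, Real.dist_eq, abs_of_nonneg (sub_nonneg.mpr hyx), ← mul_sub,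
      Real.norm_eq_abs, abs_mul, abs_of_pos (exp_pos _)]
    calc exp (a * t) * |‖V x t‖ - ‖V y t‖| ≤ exp (a * t) * ‖V x t - V y t‖ := by
          gcongr; exact abs_norm_sub_norm_le _ _
      _ ≤ _ := h.exp_mul_norm_sub_le_of_family hN ha hV hVu hy.1 hyx hx.2 hM
          fun r hr => by simpa using hB r hr
  refine continuousOn_of_dist_le_add (C := N * exp (a * t))
    (D := N * exp (a * t) * (M * (N * B))) hu fun x hx y hy => ?_
  rcases le_total y x with hyx | hxy
  · exact key x hx y hy hyx
  · rw [dist_comm, dist_comm (u x), dist_comm x]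
    exact key y hy x hx hxy

lemma slope_exp_mul_norm_family_le (h : UniformExpDecay A N a)
    (hV : ∀ s r, 0 ≤ r → HasDerivAt (V s) (A r (V s r)) r) (hVu : ∀ s, V s s = u s)
    {s z : ℝ} (hs : 0 ≤ s) (hsz : s < z) (hzt : z ≤ t) :
    slope (fun s => exp (a * t) * ‖V s t‖) s z ≤
      N * exp (a * z) * ‖slope (fun z => u z - V s z) s z‖ := by
  have hzs : 0 < z - s := sub_pos.mpr hsz
  rw [slope_def_field, slope_def_module, hVu, sub_self, sub_zero, norm_smul, norm_inv,
    Real.norm_of_nonneg hzs.le, div_eq_inv_mul, mul_left_comm]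
  gcongr
  calc exp (a * t) * ‖V z t‖ - exp (a * t) * ‖V s t‖ ≤ exp (a * t) * ‖V z t - V s t‖ := by
        rw [← mul_sub]; gcongr; exact norm_sub_norm_le _ _
    _ ≤ N * exp (a * z) * ‖u z - V s z‖ := by
        simpa only [hVu] using h.exp_mul_norm_sub_le (hV z) (hV s) (hs.trans hsz.le) hzt

lemma frequently_slope_exp_mul_norm_family_lt (h : UniformExpDecay A N a)
    (hu : ∀ t, 0 ≤ t → HasDerivAt u (A t (u t) + f t) t)
    (hV : ∀ s r, 0 ≤ r → HasDerivAt (V s) (A r (V s r)) r) (hVu : ∀ s, V s s = u s)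
    {s r : ℝ} (hs : s ∈ Ico 0 t) (hr : N * exp (a * s) * ‖f s‖ < r) :
    ∃ᶠ z in 𝓝[>] s, slope (fun s => exp (a * t) * ‖V s t‖) s z < r := by
  have hw : HasDerivAt (fun z => u z - V s z) (f s) s := by
    have := (hu s hs.1).sub (hV s s hs.1)
    rwa [hVu, add_sub_cancel_left] at this
  have hlim : Tendsto (fun z => N * exp (a * z) * ‖slope (fun z => u z - V s z) s z‖) (𝓝[>] s)
      (𝓝 (N * exp (a * s) * ‖f s‖)) :=
    ((continuous_const.mul (continuous_exp.comp (continuous_const.mul continuous_id))).tendsto s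
      |>.mono_left nhdsWithin_le_nhds).mul
      ((hasDerivAt_iff_tendsto_slope.mp hw).mono_left
        (nhdsWithin_mono _ fun _ hz => ne_of_gt hz)).norm
  refine ((hlim.eventually_lt_const hr).and (Ioc_mem_nhdsGT hs.2)).frequently.mono ?_
  rintro z ⟨hz, hsz, hzt⟩
  exact (h.slope_exp_mul_norm_family_le hV hVu hs.1 hsz hzt).trans_lt hz

theorem exp_mul_norm_le_add_integral [CompleteSpace E] (h : UniformExpDecay A N a) (hN : 0 ≤ N)
    (ha : 0 ≤ a) (hA : ContinuousOn A (Ici 0))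
    (hu : ∀ t, 0 ≤ t → HasDerivAt u (A t (u t) + f t) t) {ρ : ℝ → ℝ} (hρ : Continuous ρ)
    (hf : ∀ t, 0 ≤ t → ‖f t‖ ≤ ρ t) (ht : 0 ≤ t) :
    exp (a * t) * ‖u t‖ ≤ N * ‖u 0‖ + ∫ s in 0..t, N * exp (a * s) * ρ s := by
  choose V hVu hV using fun s => exists_forall_hasDerivAt_of_continuousOn_Ici hA s (u s)
  have hφ : Continuous fun s => N * exp (a * s) * ρ s := by fun_prop
  have hB : ∀ s, HasDerivAt (fun s => N * ‖u 0‖ + ∫ r in 0..s, N * exp (a * r) * ρ r)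
      (N * exp (a * s) * ρ s) s := fun s =>
    (hφ.integral_hasStrictDerivAt 0 s).hasDerivAt.const_add _
  have h0 : exp (a * t) * ‖V 0 t‖ ≤ N * ‖u 0‖ + ∫ r in 0..0, N * exp (a * r) * ρ r := by
    simpa [hVu] using h.exp_mul_norm_le (hV 0) le_rfl ht
  have := image_le_of_liminf_slope_right_le_deriv_boundary
    (h.continuousOn_exp_mul_norm_family hN ha (hA.mono Icc_subset_Ici_self)
      (fun s hs => (hu s hs.1).continuousAt.continuousWithinAt) hV hVu) h0
    (HasDerivAt.continuousOn fun s _ => hB s) (fun s _ => (hB s).hasDerivWithinAt)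
    (fun s hs r hr => h.frequently_slope_exp_mul_norm_family_lt hu hV hVu hs
      ((by gcongr; exact hf s hs.1 : N * exp (a * s) * ‖f s‖ ≤ _).trans_lt hr))
    ⟨ht, le_rfl⟩
  simpa only [hVu] using this

theorem norm_le_mul_exp_of_forall_norm_le [CompleteSpace E] (h : UniformExpDecay A N a)
    (hN : 0 ≤ N) (ha : 0 ≤ a) (hA : ContinuousOn A (Ici 0)) {F : ℝ → E → E} {c₀ p m b : ℝ}
    (hc₀ : 0 ≤ c₀) (hp : 1 ≤ p) (hF : ∀ t, 0 ≤ t → ∀ x, ‖F t x‖ ≤ c₀ * ‖x‖ ^ p)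
    (hu : ∀ t, 0 ≤ t → HasDerivAt u (A t (u t) + F t (u t)) t)
    (hb : ∀ s ∈ Icc 0 b, ‖u s‖ ≤ m) :
    ∀ t ∈ Icc 0 b, ‖u t‖ ≤ N * ‖u 0‖ * exp (-(a - N * c₀ * m ^ (p - 1)) * t) := by
  intro t ht
  have hm : 0 ≤ m := (norm_nonneg _).trans (hb 0 ⟨le_rfl, ht.1.trans ht.2⟩)
  set ū : ℝ → E := fun s => u (max s 0)
  have hū : Continuous ū :=
    (show ContinuousOn u (Ici 0) from fun s hs => (hu s hs).continuousAt.continuousWithinAt)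
      |>.comp_continuous (continuous_id.max continuous_const) fun s => le_max_right s 0
  have hūu : ∀ s, 0 ≤ s → ū s = u s := fun s hs => by simp only [ū, max_eq_left hs]
  have hρ : Continuous fun s => c₀ * ‖ū s‖ ^ p :=
    continuous_const.mul (hū.norm.rpow_const fun _ => Or.inr (zero_le_one.trans hp))
  set K := N * c₀ * m ^ (p - 1)
  have hgw := le_mul_exp_of_le_add_integral (z := fun s => exp (a * s) * ‖ū s‖)
    (C := N * ‖u 0‖) (K := K) (b := b) (by fun_prop) (by positivity) (fun s hs => ?_) t ht
  · calc ‖u t‖ = exp (-(a * t)) * (exp (a * t) * ‖ū t‖) := by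
          rw [hūu t ht.1, ← mul_assoc, ← exp_add, neg_add_cancel, exp_zero, one_mul]
      _ ≤ exp (-(a * t)) * (N * ‖u 0‖ * exp (K * t)) := by gcongr
      _ = N * ‖u 0‖ * exp (-(a - K) * t) := by
          rw [mul_left_comm, ← exp_add]; ring_nf
  · have hduh := h.exp_mul_norm_le_add_integral hN ha hA (f := fun t => F t (u t)) hu
      hρ (fun t ht => by simpa only [hūu t ht] using hF t ht (u t)) hs.1
    rw [hūu s hs.1, ← intervalIntegral.integral_const_mul]
    refine hduh.trans (add_le_add le_rfl
      (intervalIntegral.integral_mono_on hs.1 ?_ ?_ fun r hr => ?_))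
    · exact (by fun_prop : Continuous fun s => N * exp (a * s) * (c₀ * ‖ū s‖ ^ p))
        |>.intervalIntegrable _ _
    · exact (by fun_prop : Continuous fun s => K * (exp (a * s) * ‖ū s‖)).intervalIntegrable _ _
    · have hr' : ‖ū r‖ ≤ m := by rw [hūu r hr.1]; exact hb r ⟨hr.1, hr.2.trans hs.2⟩
      calc N * exp (a * r) * (c₀ * ‖ū r‖ ^ p)
          ≤ N * exp (a * r) * (c₀ * (m ^ (p - 1) * ‖ū r‖)) := by
            gcongr; exact rpow_le_rpow_sub_one_mul_self (norm_nonneg _) hr' hp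
        _ = K * (exp (a * r) * ‖ū r‖) := by ring

theorem exists_norm_le_mul_exp [CompleteSpace E] (h : UniformExpDecay A N a) (hN : 1 ≤ N)
    (ha : 0 < a) (hA : ContinuousOn A (Ici 0)) {F : ℝ → E → E} {c₀ p : ℝ} (hc₀ : 0 < c₀)
    (hp : 1 < p) (hF : ∀ t, 0 ≤ t → ∀ x, ‖F t x‖ ≤ c₀ * ‖x‖ ^ p) :
    ∃ r > 0, ∀ u : ℝ → E, (∀ t, 0 ≤ t → HasDerivAt u (A t (u t) + F t (u t)) t) →
      ‖u 0‖ ≤ r → ∀ t, 0 ≤ t → ‖u t‖ ≤ N * ‖u 0‖ * exp (-(a / 2) * t) := by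
  obtain ⟨m, hm, hmK⟩ : ∃ m > 0, N * c₀ * m ^ (p - 1) = a / 2 :=
    ⟨(a / (2 * N * c₀)) ^ (p - 1)⁻¹, by positivity, by
      rw [rpow_inv_rpow (by positivity) (by linarith)]; field_simp⟩
  refine ⟨m / (2 * N), by positivity, fun u hu hu0 => ?_⟩
  have hu0m : N * ‖u 0‖ ≤ m / 2 := by
    rw [le_div_iff₀ (by positivity)] at hu0
    linarith
  have hsmall : ∀ b, 0 ≤ b → (∀ s ∈ Icc 0 b, ‖u s‖ ≤ m) →
      ∀ t ∈ Icc 0 b, ‖u t‖ ≤ N * ‖u 0‖ * exp (-(a / 2) * t) := fun b _ hb => by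
    simpa only [hmK, sub_half] using h.norm_le_mul_exp_of_forall_norm_le (by positivity) ha.le hA
      hc₀.le hp.le hF hu hb
  have hbound : ∀ t, 0 ≤ t → ‖u t‖ < m :=
    forall_lt_of_continuousOn_Ici (fun t ht => (hu t ht).continuousAt.norm.continuousWithinAt)
      (by nlinarith [norm_nonneg (u 0)]) fun b hb hub =>
        calc ‖u b‖ ≤ N * ‖u 0‖ * exp (-(a / 2) * b) := hsmall b hb hub b ⟨hb, le_rfl⟩
          _ ≤ N * ‖u 0‖ :=
            mul_le_of_le_one_right (by positivity) (exp_le_one_iff.mpr (by nlinarith))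
          _ < m := by linarith
  exact fun t ht => hsmall t ht (fun s hs => (hbound s hs.1).le) t ⟨ht, le_rfl⟩

end UniformExpDecay

end BohlExponent

theorem asymptotic_stability_negative_bohl_exponent_general
    {H : Type*} [NormedAddCommGroup H] [InnerProductSpace ℂ H] [CompleteSpace H]
    (A : ℝ → H →L[ℂ] H) (hA_cont : ContinuousOn A (Set.Ici 0))
    (F : ℝ → H → H)
    (c₀ p : ℝ) (hc₀ : 0 < c₀) (hp : 1 < p)
    (hF : ∀ t : ℝ, 0 ≤ t → ∀ x : H, ‖F t x‖ ≤ c₀ * ‖x‖ ^ p)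
    (N a : ℝ) (ha : 0 < a)
    (hlin : ∀ v : ℝ → H, (∀ t : ℝ, 0 ≤ t → HasDerivAt v (A t (v t)) t) →
      ∀ s t : ℝ, 0 ≤ s → s ≤ t →
        ‖v t‖ ≤ N * Real.exp (-a * (t - s)) * ‖v s‖) :
    ∀ ε : ℝ, 0 < ε → ∃ δ : ℝ, 0 < δ ∧
      ∀ u : ℝ → H, (∀ t : ℝ, 0 ≤ t → HasDerivAt u (A t (u t) + F t (u t)) t) →
        ‖u 0‖ ≤ δ →
        (∀ t : ℝ, 0 ≤ t → ‖u t‖ ≤ ε) ∧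
        Filter.Tendsto (fun t : ℝ => ‖u t‖) Filter.atTop (nhds 0) := by
  intro ε hε
  have hdecay : UniformExpDecay (fun t => (A t).restrictScalars ℝ) (max N 1) a :=
    UniformExpDecay.mono (show UniformExpDecay (fun t => (A t).restrictScalars ℝ) N a from hlin)
      (le_max_left N 1)
  obtain ⟨r, hr, hstable⟩ := hdecay.exists_norm_le_mul_exp (le_max_right N 1) ha
    ((ContinuousLinearMap.restrictScalarsL ℂ H H ℝ ℝ).continuous.comp_continuousOn hA_cont)
    hc₀ hp hF
  refine ⟨min r (ε / max N 1), by positivity, fun u hu hu0 => ?_⟩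
  have hdecay_u : ∀ t, 0 ≤ t → ‖u t‖ ≤ max N 1 * ‖u 0‖ * exp (-(a / 2) * t) :=
    hstable u hu (hu0.trans (min_le_left _ _))
  have hε' : max N 1 * ‖u 0‖ ≤ ε := by
    have := hu0.trans (min_le_right _ _)
    rwa [le_div_iff₀ (by positivity), mul_comm] at this
  refine ⟨fun t ht => (hdecay_u t ht).trans <| (mul_le_of_le_one_right (by positivity)
    (exp_le_one_iff.mpr (by nlinarith))).trans hε', ?_⟩
  refine squeeze_zero' (Eventually.of_forall fun t => norm_nonneg _)
    ((eventually_ge_atTop 0).mono hdecay_u) ?_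
  simpa using (tendsto_exp_atBot.comp (tendsto_id.const_mul_atTop_of_neg
    (by linarith : -(a / 2) < 0))).const_mul (max N 1 * ‖u 0‖)

/-- **Proposition 1.1** (from Daleckii–Krein, Theorem 3.1 Ch. 7). If the linear
problem `v' = A(t)v` has negative upper general (Bohl) exponent, i.e.
`‖v t‖ ≤ N e^{-a(t-s)} ‖v s‖` for all solutions and all `t ≥ s ≥ 0` with
constants `N > 0`, `a > 0`, and `‖F(t,x)‖ ≤ c₀‖x‖^p` with `p > 1`, then the zero
solution of `u' = A(t)u + F(t,u)` is asymptotically stable in the Lyapunov sense. -/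
theorem asymptotic_stability_negative_bohl_exponent
    {H : Type*} [NormedAddCommGroup H] [InnerProductSpace ℂ H] [CompleteSpace H]
    (A : ℝ → H →L[ℂ] H) (hA_cont : ContinuousOn A (Set.Ici 0))
    (F : ℝ → H → H)
    (c₀ p : ℝ) (hc₀ : 0 < c₀) (hp : 1 < p)
    (hF : ∀ t : ℝ, 0 ≤ t → ∀ x : H, ‖F t x‖ ≤ c₀ * ‖x‖ ^ p)
    (N a : ℝ) (hN : 0 < N) (ha : 0 < a)
    (hlin : ∀ v : ℝ → H, (∀ t : ℝ, 0 ≤ t → HasDerivAt v (A t (v t)) t) →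
      ∀ s t : ℝ, 0 ≤ s → s ≤ t →
        ‖v t‖ ≤ N * Real.exp (-a * (t - s)) * ‖v s‖) :
    ∀ ε : ℝ, 0 < ε → ∃ δ : ℝ, 0 < δ ∧
      ∀ u : ℝ → H, (∀ t : ℝ, 0 ≤ t → HasDerivAt u (A t (u t) + F t (u t)) t) →
        ‖u 0‖ ≤ δ →
        (∀ t : ℝ, 0 ≤ t → ‖u t‖ ≤ ε) ∧
        Filter.Tendsto (fun t : ℝ => ‖u t‖) Filter.atTop (nhds 0) :=
  asymptotic_stability_negative_bohl_exponent_general A hA_cont F c₀ p hc₀ hp hF N a ha hlin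
end
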